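/- arXiv:2211.15070 — 3 statements merged into one kernel-verified Lean document; each statement's English description precedes it below -/
import Mathlib

section
/- Let D̂_{B₁}(t) be formed with pre-change blocks X^{(1)},…,X^{(N)} (each consisting of B₁ i.i.d. p-samples) and D̂_{B₂}(t+s) with pre-change blocks X̃^{(1)},…,X̃^{(N)} (each consisting of B₂ i.i.d. p-samples), where all pre-change samples of the two statistics are mutually independent of each other and of the observation sequence, all observations Y_s are i.i.d. from p, B₁, B₂ ≥ 2, and s ≥ 0 is an integer. Then Cov(D̂_{B₁}(t), D̂_{B₂}(t+s)) = C₂ · (ℓ choose 2) / ( (B₁ choose 2)·(B₂ choose 2) ), where ℓ = 0 if B₂ − s < 0, ℓ = B₂ − s if 0 ≤ B₂ − s < B₁, and ℓ = B₁ otherwise, and C₂ = Cov[h(X,X′,Y,Y′), h(X″,X‴,Y,Y′)] for X, X′, X″, X‴, Y, Y′ i.i.d. from p. -/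
open MeasureTheory ProbabilityTheory

noncomputable section

/-- The kernel `h(x₁,x₂,y₁,y₂) = k(x₁,x₂) + k(y₁,y₂) − k(x₁,y₂) − k(x₂,y₁)`. -/
def hker {𝒳 : Type*} (k : 𝒳 → 𝒳 → ℝ) (x₁ x₂ y₁ y₂ : 𝒳) : ℝ :=
  k x₁ x₂ + k y₁ y₂ - k x₁ y₂ - k x₂ y₁

/-- The unbiased MMD estimator on two blocks of length `B`. -/
def mmdHat {𝒳 : Type*} (k : 𝒳 → 𝒳 → ℝ) (B : ℕ) (X Y : Fin B → 𝒳) : ℝ :=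
  ((B : ℝ) * ((B : ℝ) - 1))⁻¹ *
    ∑ i : Fin B, ∑ j ∈ Finset.univ.erase i, hker k (X i) (X j) (Y i) (Y j)

/-- Covariance of two real random variables. -/
def covFn {Ω : Type*} [MeasurableSpace Ω] (μ : Measure Ω) (f g : Ω → ℝ) : ℝ :=
  (∫ ω, f ω * g ω ∂μ) - (∫ ω, f ω ∂μ) * ∫ ω, g ω ∂μ

/-- `C₂ = Cov[h(X,X′,Y,Y′), h(X″,X‴,Y,Y′)]` for `X,X′,X″,X‴,Y,Y′` i.i.d. from `p`. -/
def C2 {𝒳 : Type*} [MeasurableSpace 𝒳] (p : Measure 𝒳) (k : 𝒳 → 𝒳 → ℝ) : ℝ :=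
  covFn (Measure.pi fun _ : Fin 6 => p)
    (fun ω => hker k (ω 0) (ω 1) (ω 4) (ω 5))
    (fun ω => hker k (ω 2) (ω 3) (ω 4) (ω 5))

/-- The block-averaged MMD statistic `D̂_B(t)` built from `N` pre-change blocks `X`
(each an infinite i.i.d. sequence, of which the first `B` entries are used) and the
post-change block `Y_B(t) = (Y_{t−B+1},…,Y_t)`. -/
def DhatAt {𝒳 Ω : Type*} (k : 𝒳 → 𝒳 → ℝ) (N B : ℕ)
    (X : Fin N → Fin B → Ω → 𝒳) (Y : ℤ → Ω → 𝒳) (t : ℤ) (ω : Ω) : ℝ :=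
  (N : ℝ)⁻¹ * ∑ i : Fin N, mmdHat k B (fun j => X i j ω)
    fun j : Fin B => Y (t - (B : ℤ) + 1 + ((j : ℕ) : ℤ)) ω

/-!
Both statistics are linear combinations of kernel terms `h(X_a, X_b, Y_u, Y_v)`, so the covariance
is a double sum of covariances of such terms. The pre-change samples of the two statistics are
disjoint, so two terms can only share observations `Y`. If they share both observations, their
covariance is `C₂` (using the symmetry `h(x₁, x₂, y₁, y₂) = h(x₂, x₁, y₂, y₁)` when the shared
pair appears in reversed order). Otherwise both `X`'s and one `Y` of one term are independent of
everything else; since `h` is degenerate, `∫ h(x₁, x₂, y₁, y) d(p ⊗ p ⊗ p) = 0` for every fixed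
`y` (by the cyclic symmetry of `p ⊗ p ⊗ p`), such a covariance vanishes. Each pair of blocks
contributes `2ℓ(ℓ - 1)` pairs of terms sharing both observations, `ℓ` being the overlap of the two
observation windows.
-/

section Kernel

variable {𝒳 : Type*} {k : 𝒳 → 𝒳 → ℝ}

lemma hker_swap (hk_symm : ∀ x y, k x y = k y x) (x₁ x₂ y₁ y₂ : 𝒳) :
    hker k x₁ x₂ y₁ y₂ = hker k x₂ x₁ y₂ y₁ := by
  unfold hker; rw [hk_symm x₁ x₂, hk_symm y₁ y₂]; ring

lemma abs_hker_le {K : ℝ} (hk : ∀ x y, |k x y| ≤ K) (x₁ x₂ y₁ y₂ : 𝒳) :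
    |hker k x₁ x₂ y₁ y₂| ≤ 4 * K := by
  unfold hker
  have := hk x₁ x₂; have := hk y₁ y₂; have := hk x₁ y₂; have := hk x₂ y₁
  rw [abs_le] at *
  constructor <;> linarith

variable [MeasurableSpace 𝒳]

lemma measurable_hker (hk : Measurable fun r : 𝒳 × 𝒳 => k r.1 r.2)
    {α : Type*} [MeasurableSpace α] {f₁ f₂ g₁ g₂ : α → 𝒳} (hf₁ : Measurable f₁)
    (hf₂ : Measurable f₂) (hg₁ : Measurable g₁) (hg₂ : Measurable g₂) :
    Measurable fun a => hker k (f₁ a) (f₂ a) (g₁ a) (g₂ a) := by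
  unfold hker
  fun_prop

lemma memLp_hker (hk : Measurable fun r : 𝒳 × 𝒳 => k r.1 r.2) {K : ℝ} (hK : ∀ x y, |k x y| ≤ K)
    {α : Type*} [MeasurableSpace α] {μ : Measure α} [IsFiniteMeasure μ] (q : ENNReal)
    {f₁ f₂ g₁ g₂ : α → 𝒳} (hf₁ : Measurable f₁) (hf₂ : Measurable f₂) (hg₁ : Measurable g₁)
    (hg₂ : Measurable g₂) :
    MemLp (fun a => hker k (f₁ a) (f₂ a) (g₁ a) (g₂ a)) q μ :=
  .of_bound (measurable_hker hk hf₁ hf₂ hg₁ hg₂).aestronglyMeasurable (4 * K)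
    (ae_of_all _ fun _ => abs_hker_le hK _ _ _ _)

end Kernel

lemma covFn_eq_covariance {Ω : Type*} [MeasurableSpace Ω] {μ : Measure Ω}
    [IsProbabilityMeasure μ] {f g : Ω → ℝ} (hf : MemLp f 2 μ) (hg : MemLp g 2 μ) :
    covFn μ f g = cov[f, g; μ] := by
  rw [covariance_eq_sub hf hg]
  rfl

section Degenerate

variable {𝒳 : Type*} [MeasurableSpace 𝒳] {k : 𝒳 → 𝒳 → ℝ} {K : ℝ}

/-- The cyclic shift `(w₁, w₂, w₃) ↦ (w₂, w₃, w₁)` preserves `p ⊗ p ⊗ p`. -/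
lemma measurePreserving_rotate (p : Measure 𝒳) [SFinite p] :
    MeasurePreserving (MeasurableEquiv.prodComm.trans MeasurableEquiv.prodAssoc)
      (p.prod (p.prod p)) (p.prod (p.prod p)) :=
  (measurePreserving_prodAssoc p p p).comp Measure.measurePreserving_swap

lemma integral_hker_eq_zero (hk : Measurable fun r : 𝒳 × 𝒳 => k r.1 r.2)
    (hK : ∀ x y, |k x y| ≤ K) (p : Measure 𝒳) [IsProbabilityMeasure p] (y : 𝒳) :
    ∫ w : 𝒳 × 𝒳 × 𝒳, hker k w.1 w.2.1 w.2.2 y ∂(p.prod (p.prod p)) = 0 := by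
  have hσ := measurePreserving_rotate p
  have hxx : ∫ w : 𝒳 × 𝒳 × 𝒳, k w.2.1 w.2.2 ∂(p.prod (p.prod p))
      = ∫ w, k w.1 w.2.1 ∂(p.prod (p.prod p)) :=
    hσ.integral_comp' (fun w => k w.1 w.2.1)
  have hxy : ∫ w : 𝒳 × 𝒳 × 𝒳, k w.2.2 y ∂(p.prod (p.prod p))
      = ∫ w, k w.1 y ∂(p.prod (p.prod p)) :=
    (hσ.integral_comp' (fun w => k w.2.1 y)).trans (hσ.integral_comp' (fun w => k w.1 y))
  have hint {f : 𝒳 × 𝒳 × 𝒳 → 𝒳 × 𝒳} (hf : Measurable f) :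
      Integrable (fun w => k (f w).1 (f w).2) (p.prod (p.prod p)) :=
    .of_bound (hk.comp hf).aestronglyMeasurable K (ae_of_all _ fun w => hK _ _)
  have h₁ := hint (f := fun w => (w.1, w.2.1)) (by fun_prop)
  have h₂ := hint (f := fun w => (w.2.2, y)) (by fun_prop)
  have h₃ := hint (f := fun w => (w.1, y)) (by fun_prop)
  have h₄ := hint (f := fun w => (w.2.1, w.2.2)) (by fun_prop)
  simp only at h₁ h₂ h₃ h₄
  unfold hker
  rw [integral_sub ?_ h₄, integral_sub ?_ h₃, integral_add h₁ h₂, hxx, hxy]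
  · ring
  exacts [h₁.add h₂, (h₁.add h₂).sub h₃]

end Degenerate

section IID

variable {𝒳 ι Ω : Type*} [MeasurableSpace 𝒳] [MeasurableSpace Ω] {P : Measure Ω}
  [IsProbabilityMeasure P] {p : Measure 𝒳} {Z : ι → Ω → 𝒳}

lemma map_eq_pi_of_iIndepFun {κ : Type*} [Fintype κ] (hZ : iIndepFun Z P)
    (hmeas : ∀ i, Measurable (Z i)) (hlaw : ∀ i, P.map (Z i) = p) {e : κ → ι}
    (he : Function.Injective e) :
    P.map (fun ω j => Z (e j) ω) = Measure.pi fun _ => p := by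
  rw [(iIndepFun_iff_map_fun_eq_pi_map fun j => (hmeas (e j)).aemeasurable).1 (hZ.precomp he)]
  simp_rw [hlaw]

lemma map_pair_eq_prod (hZ : iIndepFun Z P) (hmeas : ∀ i, Measurable (Z i))
    (hlaw : ∀ i, P.map (Z i) = p) {a b : ι} (hab : a ≠ b) :
    P.map (fun ω => (Z a ω, Z b ω)) = p.prod p := by
  rw [(indepFun_iff_map_prod_eq_prod_map_map (hmeas a).aemeasurable
    (hmeas b).aemeasurable).1 (hZ.indepFun hab), hlaw, hlaw]

lemma map_triple_eq_prod (hZ : iIndepFun Z P) (hmeas : ∀ i, Measurable (Z i))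
    (hlaw : ∀ i, P.map (Z i) = p) {a b u : ι} (hab : a ≠ b) (hau : a ≠ u) (hbu : b ≠ u) :
    P.map (fun ω => (Z a ω, Z b ω, Z u ω)) = p.prod (p.prod p) := by
  have h := (hZ.indepFun_prodMk hmeas b u a hab.symm hau.symm).symm
  rw [(indepFun_iff_map_prod_eq_prod_map_map (hmeas a).aemeasurable
    ((hmeas b).prodMk (hmeas u)).aemeasurable).1 h, hlaw, map_pair_eq_prod hZ hmeas hlaw hbu]

end IID

section IIDCov

variable {𝒳 ι Ω : Type*} [MeasurableSpace 𝒳] [MeasurableSpace Ω] {P : Measure Ω}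
  [IsProbabilityMeasure P] {p : Measure 𝒳} [IsProbabilityMeasure p] {Z : ι → Ω → 𝒳}
  {k : 𝒳 → 𝒳 → ℝ} {K : ℝ}

lemma integral_hker_mul_eq_zero (hk : Measurable fun r : 𝒳 × 𝒳 => k r.1 r.2)
    (hK : ∀ x y, |k x y| ≤ K) {β : Type*} [MeasurableSpace β] {W : Ω → 𝒳 × 𝒳 × 𝒳}
    {V : Ω → β} (hW : Measurable W) (hV : Measurable V) (hWlaw : P.map W = p.prod (p.prod p))
    (hWV : IndepFun W V P) {y : β → 𝒳} (hy : Measurable y) {g : β → ℝ} (hg : Measurable g)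
    {C : ℝ} (hC : ∀ b, |g b| ≤ C) :
    ∫ ω, hker k (W ω).1 (W ω).2.1 (W ω).2.2 (y (V ω)) * g (V ω) ∂P = 0 := by
  have hF : Measurable fun z : (𝒳 × 𝒳 × 𝒳) × β => hker k z.1.1 z.1.2.1 z.1.2.2 (y z.2) * g z.2 :=
    (measurable_hker hk (by fun_prop) (by fun_prop) (by fun_prop) (by fun_prop)).mul
      (hg.comp measurable_snd)
  have hFint : Integrable
      (fun z : (𝒳 × 𝒳 × 𝒳) × β => hker k z.1.1 z.1.2.1 z.1.2.2 (y z.2) * g z.2)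
      ((p.prod (p.prod p)).prod (P.map V)) := by
    refine .of_bound hF.aestronglyMeasurable (4 * K * C) (ae_of_all _ fun z => ?_)
    rw [Real.norm_eq_abs, abs_mul]
    exact mul_le_mul (abs_hker_le hK _ _ _ _) (hC _) (abs_nonneg _)
      ((abs_nonneg _).trans (abs_hker_le hK z.1.1 z.1.1 z.1.1 z.1.1))
  rw [← integral_map
    (f := fun z : (𝒳 × 𝒳 × 𝒳) × β => hker k z.1.1 z.1.2.1 z.1.2.2 (y z.2) * g z.2)
    (hW.prodMk hV).aemeasurable hF.aestronglyMeasurable,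
    (indepFun_iff_map_prod_eq_prod_map_map hW.aemeasurable hV.aemeasurable).1 hWV, hWlaw,
    integral_prod_symm _ hFint]
  simp [integral_mul_const, integral_hker_eq_zero hk hK]

variable (hZ : iIndepFun Z P) (hmeas : ∀ i, Measurable (Z i)) (hlaw : ∀ i, P.map (Z i) = p)
  (hk : Measurable fun r : 𝒳 × 𝒳 => k r.1 r.2) (hK : ∀ x y, |k x y| ≤ K)
include hZ hmeas hlaw hk hK

lemma covariance_hker_eq_zero [DecidableEq ι] {a b u v a' b' u' v' : ι} (hab : a ≠ b)
    (hau : a ≠ u) (hbu : b ≠ u) (hfree : Disjoint ({a, b, u} : Finset ι) {v, a', b', u', v'}) :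
    cov[fun ω => hker k (Z a ω) (Z b ω) (Z u ω) (Z v ω),
      fun ω => hker k (Z a' ω) (Z b' ω) (Z u' ω) (Z v' ω); P] = 0 := by
  set T : Finset ι := {v, a', b', u', v'}
  have hW := (hmeas a).prodMk ((hmeas b).prodMk (hmeas u))
  have hV : Measurable fun ω (i : T) => Z i ω := measurable_pi_lambda _ fun i => hmeas i
  have hWV : IndepFun (fun ω => (Z a ω, Z b ω, Z u ω)) (fun ω (i : T) => Z i ω) P :=
    (hZ.indepFun_finset _ _ hfree hmeas).comp
      (φ := fun m : ({a, b, u} : Finset ι) → 𝒳 =>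
        (m ⟨a, by simp⟩, m ⟨b, by simp⟩, m ⟨u, by simp⟩))
      (by fun_prop) measurable_id
  have hWlaw := map_triple_eq_prod hZ hmeas hlaw hab hau hbu
  have hmean := integral_hker_mul_eq_zero hk hK hW hV hWlaw hWV
    (y := fun m => m ⟨v, by simp [T]⟩) (by fun_prop) (g := fun _ => 1) measurable_const
    (C := 1) (by simp)
  have hprod := integral_hker_mul_eq_zero hk hK hW hV hWlaw hWV
    (y := fun m => m ⟨v, by simp [T]⟩) (by fun_prop)
    (g := fun m => hker k (m ⟨a', by simp [T]⟩) (m ⟨b', by simp [T]⟩) (m ⟨u', by simp [T]⟩)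
      (m ⟨v', by simp [T]⟩))
    (measurable_hker hk (by fun_prop) (by fun_prop) (by fun_prop) (by fun_prop))
    (fun _ => abs_hker_le hK _ _ _ _)
  simp only [mul_one] at hmean
  rw [covariance_eq_sub (memLp_hker hk hK 2 (hmeas _) (hmeas _) (hmeas _) (hmeas _))
    (memLp_hker hk hK 2 (hmeas _) (hmeas _) (hmeas _) (hmeas _))]
  simp only [Pi.mul_apply]
  rw [hprod, hmean, zero_mul, sub_zero]

lemma covariance_hker_of_injective {a b a' b' u v : ι}
    (he : Function.Injective ![a, b, a', b', u, v]) :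
    cov[fun ω => hker k (Z a ω) (Z b ω) (Z u ω) (Z v ω),
      fun ω => hker k (Z a' ω) (Z b' ω) (Z u ω) (Z v ω); P] = C2 p k := by
  have hmeas_tuple : Measurable fun ω (j : Fin 6) => Z (![a, b, a', b', u, v] j) ω :=
    measurable_pi_lambda _ fun j => hmeas _
  rw [C2, covFn_eq_covariance (memLp_hker hk hK 2 (by fun_prop) (by fun_prop) (by fun_prop)
      (by fun_prop)) (memLp_hker hk hK 2 (by fun_prop) (by fun_prop) (by fun_prop) (by fun_prop)),
    ← map_eq_pi_of_iIndepFun hZ hmeas hlaw he, covariance_map_fun _ _ hmeas_tuple.aemeasurable]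
  · rfl
  all_goals exact (measurable_hker hk (by fun_prop) (by fun_prop) (by fun_prop)
    (by fun_prop)).aestronglyMeasurable

lemma covariance_hker_hker [DecidableEq ι] (hk_symm : ∀ x y, k x y = k y x)
    {a b a' b' u v u' v' : ι} (hab : a ≠ b) (ha'b' : a' ≠ b') (huv : u ≠ v) (hu'v' : u' ≠ v')
    (hX : Disjoint ({a, b} : Finset ι) {a', b'})
    (hXY : Disjoint ({a, b, a', b'} : Finset ι) {u, v, u', v'}) :
    cov[fun ω => hker k (Z a ω) (Z b ω) (Z u ω) (Z v ω),
      fun ω => hker k (Z a' ω) (Z b' ω) (Z u' ω) (Z v' ω); P]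
      = C2 p k * ((if u = u' ∧ v = v' then 1 else 0) + (if u = v' ∧ v = u' then 1 else 0)) := by
  have hswap (c d x y : ι) : (fun ω => hker k (Z c ω) (Z d ω) (Z x ω) (Z y ω))
      = fun ω => hker k (Z d ω) (Z c ω) (Z y ω) (Z x ω) :=
    funext fun ω => hker_swap hk_symm _ _ _ _
  simp only [Finset.disjoint_insert_right, Finset.disjoint_singleton_right, Finset.mem_insert,
    Finset.mem_singleton, not_or] at hX hXY
  by_cases hmatch : u = u' ∧ v = v'
  · obtain ⟨rfl, rfl⟩ := hmatch
    rw [if_pos ⟨rfl, rfl⟩, if_neg fun h => huv h.1, add_zero, mul_one]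
    refine covariance_hker_of_injective hZ hmeas hlaw hk hK ?_
    intro i j h; fin_cases i <;> fin_cases j <;> simp_all [eq_comm]
  by_cases hcross : u = v' ∧ v = u'
  · obtain ⟨rfl, rfl⟩ := hcross
    rw [if_neg hmatch, if_pos ⟨rfl, rfl⟩, zero_add, mul_one, hswap a']
    refine covariance_hker_of_injective hZ hmeas hlaw hk hK ?_
    intro i j h; fin_cases i <;> fin_cases j <;> simp_all [eq_comm]
  rw [if_neg hmatch, if_neg hcross, add_zero, mul_zero]
  by_cases hu : u = u' ∨ u = v'
  · have hv : v ≠ u' ∧ v ≠ v' := by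
      constructor <;> rintro rfl <;> rcases hu with rfl | rfl <;> simp_all
    rw [hswap a]
    exact covariance_hker_eq_zero hZ hmeas hlaw hk hK hab.symm (by simp_all [eq_comm])
      (by simp_all [eq_comm]) (by simp_all [eq_comm])
  · exact covariance_hker_eq_zero hZ hmeas hlaw hk hK hab (by simp_all [eq_comm])
      (by simp_all [eq_comm]) (by simp_all [eq_comm])

end IIDCov

section Counting

open Finset

lemma sum_sum_erase_eq_sum_offDiag {α M : Type*} [DecidableEq α] [AddCommMonoid M]
    (s : Finset α) (f : α → α → M) :
    ∑ i ∈ s, ∑ j ∈ s.erase i, f i j = ∑ x ∈ s.offDiag, f x.1 x.2 := by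
  refine (sum_finset_product' _ _ _ fun x => ?_).symm
  rw [mem_offDiag, mem_erase]
  tauto

lemma sum_product_sum_product_snd {ι₁ ι₂ κ₁ κ₂ : Type*} (s₁ : Finset ι₁) (t₁ : Finset κ₁)
    (s₂ : Finset ι₂) (t₂ : Finset κ₂) (f : κ₁ → κ₂ → ℝ) :
    ∑ q₁ ∈ s₁ ×ˢ t₁, ∑ q₂ ∈ s₂ ×ˢ t₂, f q₁.2 q₂.2 = #s₁ * #s₂ * ∑ x ∈ t₁, ∑ y ∈ t₂, f x y := by
  simp only [sum_product_right (s := s₁), sum_product_right (s := s₂), sum_const, nsmul_eq_mul]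
  simp only [← mul_sum, mul_assoc]

variable {α β γ : Type*} [Fintype α] [Fintype β] [DecidableEq γ]
  {e₁ : α → γ} {e₂ : β → γ}

lemma card_filter_offDiag_offDiag (he₁ : Function.Injective e₁) (he₂ : Function.Injective e₂) :
    #{z ∈ (univ : Finset α).offDiag ×ˢ (univ : Finset β).offDiag |
        e₁ z.1.1 = e₂ z.2.1 ∧ e₁ z.1.2 = e₂ z.2.2}
      = #({z : α × β | e₁ z.1 = e₂ z.2} : Finset _).offDiag := by
  refine card_equiv (Equiv.prodProdProdComm α α β β) fun z => ?_
  simp only [mem_filter, mem_product, mem_offDiag, mem_univ, true_and,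
    Equiv.prodProdProdComm_apply]
  constructor
  · rintro ⟨⟨h₁, -⟩, h₂, h₃⟩
    exact ⟨h₂, h₃, fun h => h₁ (congrArg Prod.fst h)⟩
  · rintro ⟨h₂, h₃, hne⟩
    refine ⟨⟨fun h => hne ?_, fun h => hne ?_⟩, h₂, h₃⟩
    · rw [h, he₂ (h₂.symm.trans (h ▸ h₃))]
    · rw [h, he₁ (h₂.trans (h ▸ h₃.symm))]

variable (e₁ e₂) in
def pairMatch (x : α × α) (y : β × β) : ℝ :=
  (if e₁ x.1 = e₂ y.1 ∧ e₁ x.2 = e₂ y.2 then 1 else 0)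
    + (if e₁ x.1 = e₂ y.2 ∧ e₁ x.2 = e₂ y.1 then 1 else 0)

lemma sum_pairMatch (he₁ : Function.Injective e₁) (he₂ : Function.Injective e₂) :
    ∑ x ∈ (univ : Finset α).offDiag, ∑ y ∈ (univ : Finset β).offDiag, pairMatch e₁ e₂ x y
      = 2 * #({z : α × β | e₁ z.1 = e₂ z.2} : Finset _).offDiag := by
  have hswap (x : α × α) :
      ∑ y ∈ (univ : Finset β).offDiag, (if e₁ x.1 = e₂ y.2 ∧ e₁ x.2 = e₂ y.1 then 1 else 0 : ℝ)
        = ∑ y ∈ (univ : Finset β).offDiag, if e₁ x.1 = e₂ y.1 ∧ e₁ x.2 = e₂ y.2 then 1 else 0 :=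
    sum_equiv (Equiv.prodComm β β) (by simp [ne_comm]) fun _ _ => rfl
  simp only [pairMatch, sum_add_distrib, hswap, ← two_mul, ← mul_sum]
  rw [← sum_product' (f := fun (x : α × α) (y : β × β) =>
      if e₁ x.1 = e₂ y.1 ∧ e₁ x.2 = e₂ y.2 then (1 : ℝ) else 0),
    sum_boole, card_filter_offDiag_offDiag he₁ he₂]

end Counting

section Windows

open Finset

-- The time of the `j`-th entry of the window `(Y_{t-B+1}, …, Y_t)`.
def windowTime (t : ℤ) (B : ℕ) (j : Fin B) : ℤ := t - B + 1 + (j : ℕ)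

lemma windowTime_injective (t : ℤ) (B : ℕ) : Function.Injective (windowTime t B) :=
  fun j j' h => Fin.ext (by simpa [windowTime] using h)

lemma card_windowTime_eq (t : ℤ) (s B₁ B₂ : ℕ) :
    #({z : Fin B₁ × Fin B₂ | windowTime t B₁ z.1 = windowTime (t + s) B₂ z.2} : Finset _)
      = min B₁ (B₂ - s) := by
  rw [← card_range (min B₁ (B₂ - s))]
  refine card_bij (fun z _ => (z.1 : ℕ) - (B₁ + s - B₂)) ?_ ?_ ?_
  · intro z hz
    simp only [mem_filter, mem_univ, true_and] at hz
    unfold windowTime at hz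
    simp only [mem_range]
    omega
  · intro z hz z' hz' h
    simp only [mem_filter, mem_univ, true_and] at hz hz'
    unfold windowTime at hz hz'
    ext <;> omega
  · intro r hr
    simp only [mem_range] at hr
    refine ⟨(⟨B₁ + s - B₂ + r, by omega⟩, ⟨B₂ - (B₁ + s) + r, by omega⟩), ?_, ?_⟩
    · simp only [mem_filter, mem_univ, true_and]
      dsimp only [windowTime]
      omega
    · simp

lemma choose_two_min_sub_eq_ite (B₁ B₂ s : ℕ) :
    (min B₁ (B₂ - s)).choose 2 = if (B₂ : ℤ) - (s : ℤ) < 0 then 0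
      else if (B₂ : ℤ) - (s : ℤ) < (B₁ : ℤ) then (B₂ - s).choose 2 else B₁.choose 2 := by
  split_ifs with h₁ h₂
  · rw [show min B₁ (B₂ - s) = 0 by omega]
    rfl
  all_goals congr 1; omega

end Windows

section Statistic

open Finset

variable {𝒳 Ω : Type*} (k : 𝒳 → 𝒳 → ℝ)

lemma mmdHat_eq_sum_offDiag (B : ℕ) (X Y : Fin B → 𝒳) :
    mmdHat k B X Y = ((B : ℝ) * ((B : ℝ) - 1))⁻¹ *
      ∑ x ∈ (univ : Finset (Fin B)).offDiag, hker k (X x.1) (X x.2) (Y x.1) (Y x.2) := by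
  rw [mmdHat, sum_sum_erase_eq_sum_offDiag]

def blockTerm {N B : ℕ} (X : Fin N → Fin B → Ω → 𝒳) (Y : ℤ → Ω → 𝒳) (t : ℤ)
    (q : Fin N × Fin B × Fin B) (ω : Ω) : ℝ :=
  hker k (X q.1 q.2.1 ω) (X q.1 q.2.2 ω) (Y (windowTime t B q.2.1) ω) (Y (windowTime t B q.2.2) ω)

lemma DhatAt_eq_sum (N B : ℕ) (X : Fin N → Fin B → Ω → 𝒳) (Y : ℤ → Ω → 𝒳) (t : ℤ) :
    DhatAt k N B X Y t = fun ω => ((N : ℝ)⁻¹ * ((B : ℝ) * ((B : ℝ) - 1))⁻¹) *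
      ∑ q ∈ (univ : Finset (Fin N)) ×ˢ (univ : Finset (Fin B)).offDiag, blockTerm k X Y t q ω := by
  funext ω
  simp only [DhatAt, mmdHat_eq_sum_offDiag, sum_product, mul_sum, mul_assoc]
  rfl

end Statistic

lemma covariance_blockTerm {𝒳 Ω : Type*} [MeasurableSpace 𝒳] {p : Measure 𝒳}
    [IsProbabilityMeasure p] {k : 𝒳 → 𝒳 → ℝ} {K : ℝ}
    (hk_meas : Measurable fun r : 𝒳 × 𝒳 => k r.1 r.2) (hK : ∀ x y, |k x y| ≤ K)
    (hk_symm : ∀ x y, k x y = k y x) {N B₁ B₂ : ℕ} [MeasurableSpace Ω] {P : Measure Ω}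
    [IsProbabilityMeasure P] {X : Fin N → Fin B₁ → Ω → 𝒳} {X' : Fin N → Fin B₂ → Ω → 𝒳}
    {Y : ℤ → Ω → 𝒳} (hXmeas : ∀ i j, Measurable (X i j)) (hX'meas : ∀ i j, Measurable (X' i j))
    (hYmeas : ∀ u, Measurable (Y u))
    (hIndep : iIndepFun
      (Sum.elim
        (Sum.elim (fun ij : Fin N × Fin B₁ => X ij.1 ij.2)
          (fun ij : Fin N × Fin B₂ => X' ij.1 ij.2)) Y) P)
    (hLawX : ∀ i j, P.map (X i j) = p) (hLawX' : ∀ i j, P.map (X' i j) = p)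
    (hLawY : ∀ u, P.map (Y u) = p) (t₁ t₂ : ℤ) {q₁ : Fin N × Fin B₁ × Fin B₁}
    {q₂ : Fin N × Fin B₂ × Fin B₂} (hq₁ : q₁.2.1 ≠ q₁.2.2) (hq₂ : q₂.2.1 ≠ q₂.2.2) :
    cov[blockTerm k X Y t₁ q₁, blockTerm k X' Y t₂ q₂; P]
      = C2 p k * pairMatch (windowTime t₁ B₁) (windowTime t₂ B₂) q₁.2 q₂.2 := by
  set Z := Sum.elim (Sum.elim (fun ij : Fin N × Fin B₁ => X ij.1 ij.2)
    (fun ij : Fin N × Fin B₂ => X' ij.1 ij.2)) Y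
  have hZmeas : ∀ i, Measurable (Z i) := by rintro ((⟨i, j⟩ | ⟨i, j⟩) | u) <;> simp [Z, *]
  have hZlaw : ∀ i, P.map (Z i) = p := by rintro ((⟨i, j⟩ | ⟨i, j⟩) | u) <;> simp [Z, *]
  obtain ⟨i, j⟩ := q₁
  obtain ⟨i', j'⟩ := q₂
  have h := covariance_hker_hker (Z := Z) hIndep hZmeas hZlaw hk_meas hK hk_symm
    (a := .inl (.inl (i, j.1))) (b := .inl (.inl (i, j.2)))
    (a' := .inl (.inr (i', j'.1))) (b' := .inl (.inr (i', j'.2)))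
    (u := .inr (windowTime t₁ B₁ j.1)) (v := .inr (windowTime t₁ B₁ j.2))
    (u' := .inr (windowTime t₂ B₂ j'.1)) (v' := .inr (windowTime t₂ B₂ j'.2))
    (by simpa using hq₁) (by simpa using hq₂)
    (by simpa using (windowTime_injective _ _).ne hq₁)
    (by simpa using (windowTime_injective _ _).ne hq₂) (by simp) (by simp)
  simp only [Sum.inr.injEq] at h
  exact h

theorem stmt_1_general
    {𝒳 : Type*} [MeasurableSpace 𝒳] (p : Measure 𝒳) [IsProbabilityMeasure p]
    (k : 𝒳 → 𝒳 → ℝ) (K : ℝ)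
    (hk_meas : Measurable fun r : 𝒳 × 𝒳 => k r.1 r.2)
    (hk_symm : ∀ x y, k x y = k y x)
    (hk_nonneg : ∀ x y, 0 ≤ k x y) (hk_bdd : ∀ x y, k x y ≤ K)
    (B₁ B₂ N : ℕ) (hN : 1 ≤ N)
    (t : ℤ) (s : ℕ)
    {Ω : Type*} [MeasurableSpace Ω] (P : Measure Ω) [IsProbabilityMeasure P]
    (X : Fin N → Fin B₁ → Ω → 𝒳) (X' : Fin N → Fin B₂ → Ω → 𝒳) (Y : ℤ → Ω → 𝒳)
    (hXmeas : ∀ i j, Measurable (X i j)) (hX'meas : ∀ i j, Measurable (X' i j))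
    (hYmeas : ∀ u, Measurable (Y u))
    (hIndep : iIndepFun
      (Sum.elim
        (Sum.elim (fun ij : Fin N × Fin B₁ => X ij.1 ij.2)
          (fun ij : Fin N × Fin B₂ => X' ij.1 ij.2)) Y) P)
    (hLawX : ∀ i j, Measure.map (X i j) P = p)
    (hLawX' : ∀ i j, Measure.map (X' i j) P = p)
    (hLawY : ∀ u, Measure.map (Y u) P = p) :
    covFn P (DhatAt k N B₁ X Y t) (DhatAt k N B₂ X' Y (t + s))
      = C2 p k *
          ((if (B₂ : ℤ) - (s : ℤ) < 0 then 0
            else if (B₂ : ℤ) - (s : ℤ) < (B₁ : ℤ) then (B₂ - s).choose 2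
            else B₁.choose 2 : ℕ) : ℝ)
          / ((B₁.choose 2 : ℝ) * (B₂.choose 2 : ℝ)) := by
  have hK : ∀ x y, |k x y| ≤ K := fun x y =>
    abs_le.2 ⟨by linarith [hk_nonneg x y, hk_bdd x y], hk_bdd x y⟩
  have hmemLp {B : ℕ} {X : Fin N → Fin B → Ω → 𝒳} (hX : ∀ i j, Measurable (X i j)) (t : ℤ) q :
      MemLp (blockTerm k X Y t q) 2 P :=
    memLp_hker hk_meas hK 2 (hX _ _) (hX _ _) (hYmeas _) (hYmeas _)
  rw [DhatAt_eq_sum, DhatAt_eq_sum, covFn_eq_covariance ?_ ?_, covariance_const_mul_left,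
    covariance_const_mul_right, covariance_fun_sum_fun_sum' (fun q _ => hmemLp hXmeas t q)
      (fun q _ => hmemLp hX'meas (t + s) q),
    Finset.sum_congr rfl fun q₁ hq₁ => Finset.sum_congr rfl fun q₂ hq₂ =>
      covariance_blockTerm hk_meas hK hk_symm hXmeas hX'meas hYmeas hIndep hLawX hLawX' hLawY
        t (t + s) (Finset.mem_offDiag.1 (Finset.mem_product.1 hq₁).2).2.2
        (Finset.mem_offDiag.1 (Finset.mem_product.1 hq₂).2).2.2]
  · simp_rw [← Finset.mul_sum]
    rw [sum_product_sum_product_snd, sum_pairMatch (windowTime_injective _ _)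
      (windowTime_injective _ _), Finset.card_univ, Fintype.card_fin, Finset.offDiag_card,
      card_windowTime_eq, ← choose_two_min_sub_eq_ite, Nat.cast_sub (Nat.le_mul_self _),
      Nat.cast_mul, Nat.cast_choose_two, Nat.cast_choose_two, Nat.cast_choose_two]
    have hN₀ : (N : ℝ) ≠ 0 := Nat.cast_ne_zero.2 (by omega)
    field_simp
  exacts [(memLp_finsetSum _ fun q _ => hmemLp hXmeas t q).const_mul _,
    (memLp_finsetSum _ fun q _ => hmemLp hX'meas (t + s) q).const_mul _]

/-- **Covariance structure of the block-averaged MMD statistics under the null.**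
With all pre-change samples of the two statistics and all observations mutually
independent and i.i.d. from `p`,
`Cov(D̂_{B₁}(t), D̂_{B₂}(t+s)) = C₂·(ℓ choose 2)/((B₁ choose 2)·(B₂ choose 2))`,
where `ℓ = 0` if `B₂ − s < 0`, `ℓ = B₂ − s` if `0 ≤ B₂ − s < B₁`, and `ℓ = B₁` otherwise. -/
theorem stmt_1
    {𝒳 : Type*} [MeasurableSpace 𝒳] (p : Measure 𝒳) [IsProbabilityMeasure p]
    (k : 𝒳 → 𝒳 → ℝ) (K : ℝ) (hK : 0 < K)
    (hk_meas : Measurable fun r : 𝒳 × 𝒳 => k r.1 r.2)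
    (hk_symm : ∀ x y, k x y = k y x)
    (hk_nonneg : ∀ x y, 0 ≤ k x y) (hk_bdd : ∀ x y, k x y ≤ K)
    (B₁ B₂ N : ℕ) (hB₁ : 2 ≤ B₁) (hB₂ : 2 ≤ B₂) (hN : 1 ≤ N)
    (t : ℤ) (s : ℕ)
    {Ω : Type*} [MeasurableSpace Ω] (P : Measure Ω) [IsProbabilityMeasure P]
    (X : Fin N → Fin B₁ → Ω → 𝒳) (X' : Fin N → Fin B₂ → Ω → 𝒳) (Y : ℤ → Ω → 𝒳)
    (hXmeas : ∀ i j, Measurable (X i j)) (hX'meas : ∀ i j, Measurable (X' i j))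
    (hYmeas : ∀ u, Measurable (Y u))
    (hIndep : iIndepFun
      (Sum.elim
        (Sum.elim (fun ij : Fin N × Fin B₁ => X ij.1 ij.2)
          (fun ij : Fin N × Fin B₂ => X' ij.1 ij.2)) Y) P)
    (hLawX : ∀ i j, Measure.map (X i j) P = p)
    (hLawX' : ∀ i j, Measure.map (X' i j) P = p)
    (hLawY : ∀ u, Measure.map (Y u) P = p) :
    covFn P (DhatAt k N B₁ X Y t) (DhatAt k N B₂ X' Y (t + s))
      = C2 p k *
          ((if (B₂ : ℤ) - (s : ℤ) < 0 then 0
            else if (B₂ : ℤ) - (s : ℤ) < (B₁ : ℤ) then (B₂ - s).choose 2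
            else B₁.choose 2 : ℕ) : ℝ)
          / ((B₁.choose 2 : ℝ) * (B₂.choose 2 : ℝ)) :=
  stmt_1_general p k K hk_meas hk_symm hk_nonneg hk_bdd B₁ B₂ N hN t s P X X' Y hXmeas hX'meas
    hYmeas hIndep hLawX hLawX' hLawY
end
end

section
/- Suppose the change occurs at time 0, i.e., the observations (Y_s)_{s∈ℤ} are independent with Y_s ~ p for s ≤ 0 and Y_s ~ q for s ≥ 1, independent of the pre-change blocks (whose entries are i.i.d. from p). Then for any time t ≥ 1 and block size B ≥ 2: if B ≤ t the expectation of the block-averaged MMD statistic satisfies E₀[D̂_B(t)] = 𝒟(p,q); and if B > t it satisfies E₀[D̂_B(t)] = (t(t−1)/(B(B−1)))·𝒟(p,q). Consequently, the normalized statistic Z_B(t) = D̂_B(t)/√(Var_∞(D̂_B(t))) has mean μ_B(t) = 𝒟(p,q)/√(Var_∞(D̂_B(t))) for B ≤ t and μ_B(t) = (t(t−1)/(B(B−1)))·𝒟(p,q)/√(Var_∞(D̂_B(t))) for B > t. -/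
open MeasureTheory ProbabilityTheory

noncomputable section

/-- The squared population MMD `𝒟(p,q) = ∬ k(x,x′) d(p−q)(x) d(p−q)(x′)`. -/
def mmdSq {𝒳 : Type*} [MeasurableSpace 𝒳] (k : 𝒳 → 𝒳 → ℝ) (p q : Measure 𝒳) : ℝ :=
  (∫ x, ∫ y, k x y ∂p ∂p) + (∫ x, ∫ y, k x y ∂q ∂q)
    - (∫ x, ∫ y, k x y ∂q ∂p) - ∫ x, ∫ y, k x y ∂p ∂q

/-- `Var_∞(D̂_B(t))`: the variance of the block-averaged MMD statistic when all
`N·B + B` samples involved are i.i.d. from `p` (canonical product model). -/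
def varInfty {𝒳 : Type*} [MeasurableSpace 𝒳] (p : Measure 𝒳) (k : 𝒳 → 𝒳 → ℝ)
    (N B : ℕ) : ℝ :=
  variance
    (fun ω : ((Fin N × Fin B) ⊕ Fin B) → 𝒳 =>
      (N : ℝ)⁻¹ * ∑ i : Fin N,
        mmdHat k B (fun j => ω (Sum.inl (i, j))) fun j => ω (Sum.inr j))
    (Measure.pi fun _ => p)

/-- The block-averaged MMD statistic `D̂_B(t)` built from `N` pre-change blocks `X`
(each an infinite sequence, of which the first `B` entries are used) and the
post-change block `Y_B(t) = (Y_{t−B+1},…,Y_t)`. -/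
def DhatSeq {𝒳 Ω : Type*} (k : 𝒳 → 𝒳 → ℝ) (N B : ℕ)
    (X : Fin N → ℕ → Ω → 𝒳) (Y : ℤ → Ω → 𝒳) (t : ℕ) (ω : Ω) : ℝ :=
  (N : ℝ)⁻¹ * ∑ i : Fin N, mmdHat k B (fun j => X i j ω)
    fun j : Fin B => Y ((t : ℤ) - (B : ℤ) + 1 + ((j : ℕ) : ℤ)) ω

/-- The normalized Scan `B`-statistic `Z_B(t) = D̂_B(t)/√(Var_∞(D̂_B(t)))`. -/
def Zstat {𝒳 Ω : Type*} [MeasurableSpace 𝒳] (p : Measure 𝒳) (k : 𝒳 → 𝒳 → ℝ)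
    (N B : ℕ) (X : Fin N → ℕ → Ω → 𝒳) (Y : ℤ → Ω → 𝒳) (t : ℕ) (ω : Ω) : ℝ :=
  DhatSeq k N B X Y t ω / Real.sqrt (varInfty p k N B)

/-!
Expanding `h`, each of its four kernel terms is evaluated at two independent coordinates, so
its mean is `∬ k d(law) d(law)` (Fubini on the joint law). For distinct indices `a ≠ b` the mean
of `h(X_a, X_b, Y_a, Y_b)` is therefore `𝒟(p,q)` when `Y_a` and `Y_b` are both post-change and
`0` otherwise; symmetry of `k` makes the cross terms cancel. In the window `(t-B, t]` exactly
`m = min B t` observations are post-change, so `m(m-1)` of the `B(B-1)` ordered pairs contribute.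
-/

open Finset

section KernelIntegrals

variable {𝒳 Ω : Type*} [MeasurableSpace 𝒳] [MeasurableSpace Ω] {k : 𝒳 → 𝒳 → ℝ}

lemma integrable_comp_of_norm_le (hk_meas : Measurable fun r : 𝒳 × 𝒳 => k r.1 r.2) {K : ℝ}
    (hk_bdd : ∀ x y, ‖k x y‖ ≤ K) {μ : Measure Ω} [IsFiniteMeasure μ] {U V : Ω → 𝒳}
    (hU : AEMeasurable U μ) (hV : AEMeasurable V μ) :
    Integrable (fun ω => k (U ω) (V ω)) μ :=
  .of_bound (hk_meas.comp_aemeasurable (hU.prodMk hV)).aestronglyMeasurable K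
    (ae_of_all _ fun _ => hk_bdd _ _)

lemma integral_integral_swap_of_symm (hk_symm : ∀ x y, k x y = k y x) {μ ν : Measure 𝒳}
    [SFinite μ] [SFinite ν] (hk_int : Integrable (fun r : 𝒳 × 𝒳 => k r.1 r.2) (μ.prod ν)) :
    ∫ x, ∫ y, k x y ∂ν ∂μ = ∫ x, ∫ y, k x y ∂μ ∂ν := by
  rw [integral_integral_swap hk_int]
  simp_rw [hk_symm]

end KernelIntegrals

lemma ProbabilityTheory.IndepFun.integral_comp_eq_integral_integral {Ω 𝒳 𝒴 E : Type*}
    [MeasurableSpace Ω] [MeasurableSpace 𝒳] [MeasurableSpace 𝒴]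
    [NormedAddCommGroup E] [NormedSpace ℝ E] {P : Measure Ω} [IsFiniteMeasure P]
    {U : Ω → 𝒳} {V : Ω → 𝒴} (hU : AEMeasurable U P) (hV : AEMeasurable V P)
    (hUV : IndepFun U V P) {f : 𝒳 → 𝒴 → E}
    (hf : Integrable (Function.uncurry f) ((P.map U).prod (P.map V))) :
    ∫ ω, f (U ω) (V ω) ∂P = ∫ x, ∫ y, f x y ∂(P.map V) ∂(P.map U) := by
  have hmap : P.map (fun ω => (U ω, V ω)) = (P.map U).prod (P.map V) :=
    (indepFun_iff_map_prod_eq_prod_map_map hU hV).mp hUV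
  calc ∫ ω, f (U ω) (V ω) ∂P
      = ∫ z, Function.uncurry f z ∂(P.map fun ω => (U ω, V ω)) :=
        (integral_map (hU.prodMk hV) (hmap ▸ hf.aestronglyMeasurable)).symm
    _ = ∫ x, ∫ y, f x y ∂(P.map V) ∂(P.map U) := by rw [hmap, integral_prod _ hf]; rfl

section KernelExpectations

variable {𝒳 Ω : Type*} [MeasurableSpace 𝒳] [MeasurableSpace Ω] {k : 𝒳 → 𝒳 → ℝ} {K : ℝ}
  {P : Measure Ω} [IsFiniteMeasure P]

lemma integral_hker_comp (hk_meas : Measurable fun r : 𝒳 × 𝒳 => k r.1 r.2)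
    (hk_bdd : ∀ x y, ‖k x y‖ ≤ K) {X₁ X₂ Y₁ Y₂ : Ω → 𝒳} (hX₁ : AEMeasurable X₁ P)
    (hX₂ : AEMeasurable X₂ P) (hY₁ : AEMeasurable Y₁ P) (hY₂ : AEMeasurable Y₂ P)
    (hXX : IndepFun X₁ X₂ P) (hYY : IndepFun Y₁ Y₂ P) (hXY : IndepFun X₁ Y₂ P)
    (hYX : IndepFun X₂ Y₁ P) :
    ∫ ω, hker k (X₁ ω) (X₂ ω) (Y₁ ω) (Y₂ ω) ∂P =
      (∫ x, ∫ y, k x y ∂(P.map X₂) ∂(P.map X₁)) + (∫ x, ∫ y, k x y ∂(P.map Y₂) ∂(P.map Y₁))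
        - (∫ x, ∫ y, k x y ∂(P.map Y₂) ∂(P.map X₁))
        - ∫ x, ∫ y, k x y ∂(P.map Y₁) ∂(P.map X₂) := by
  have hint {U V : Ω → 𝒳} (hU : AEMeasurable U P) (hV : AEMeasurable V P) :
      Integrable (fun ω => k (U ω) (V ω)) P :=
    integrable_comp_of_norm_le hk_meas hk_bdd hU hV
  have hexp {U V : Ω → 𝒳} (hU : AEMeasurable U P) (hV : AEMeasurable V P)
      (hUV : IndepFun U V P) :
      ∫ ω, k (U ω) (V ω) ∂P = ∫ x, ∫ y, k x y ∂(P.map V) ∂(P.map U) :=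
    hUV.integral_comp_eq_integral_integral hU hV <|
      integrable_comp_of_norm_le hk_meas hk_bdd measurable_fst.aemeasurable
        measurable_snd.aemeasurable
  simp only [hker]
  rw [integral_sub, integral_sub, integral_add, hexp hX₁ hX₂ hXX, hexp hY₁ hY₂ hYY,
    hexp hX₁ hY₂ hXY, hexp hX₂ hY₁ hYX]
  exacts [hint hX₁ hX₂, hint hY₁ hY₂, (hint hX₁ hX₂).add (hint hY₁ hY₂), hint hX₁ hY₂,
    ((hint hX₁ hX₂).add (hint hY₁ hY₂)).sub (hint hX₁ hY₂), hint hX₂ hY₁]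

end KernelExpectations

lemma hker_mean_ite {𝒳 : Type*} [MeasurableSpace 𝒳] {k : 𝒳 → 𝒳 → ℝ}
    (hk_symm : ∀ x y, k x y = k y x) {p q : Measure 𝒳} [SFinite p] [SFinite q]
    (hk_int : Integrable (fun r : 𝒳 × 𝒳 => k r.1 r.2) (p.prod q))
    (c₁ c₂ : Prop) [Decidable c₁] [Decidable c₂] :
    (∫ x, ∫ y, k x y ∂p ∂p) + (∫ x, ∫ y, k x y ∂(if c₂ then q else p) ∂(if c₁ then q else p))
        - (∫ x, ∫ y, k x y ∂(if c₂ then q else p) ∂p)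
        - (∫ x, ∫ y, k x y ∂(if c₁ then q else p) ∂p) =
      if c₁ ∧ c₂ then mmdSq k p q else 0 := by
  have hswap := integral_integral_swap_of_symm hk_symm hk_int
  by_cases h₁ : c₁ <;> by_cases h₂ : c₂ <;> simp [h₁, h₂, mmdSq, hswap]

lemma sum_sum_erase_ite_mem_and_mem {ι M : Type*} [Fintype ι] [DecidableEq ι] [Ring M]
    (S : Finset ι) (c : M) :
    ∑ a, ∑ b ∈ univ.erase a, (if a ∈ S ∧ b ∈ S then c else 0) = #S * (#S - 1) * c := by
  have hrow : ∀ a ∈ S, ∑ b ∈ univ.erase a, (if b ∈ S then c else 0) = (#S - 1) * c := by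
    intro a ha
    rw [sum_ite_mem, sum_const, nsmul_eq_mul, erase_inter, univ_inter,
      cast_card_erase_of_mem ha]
  simp only [ite_and, sum_ite_irrel, sum_const_zero]
  rw [sum_ite_mem, univ_inter, sum_congr rfl hrow, sum_const, nsmul_eq_mul, mul_assoc]

lemma Fin.card_filter_le_val (B c : ℕ) : #{j : Fin B | c ≤ (j : ℕ)} = B - c := by
  rw [← card_map Fin.valEmbedding, ← Nat.card_Ico]
  congr 1
  ext n
  simp only [mem_map, mem_filter, mem_univ, true_and, Fin.valEmbedding_apply, mem_Ico]
  constructor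
  · rintro ⟨j, hj, rfl⟩
    exact ⟨hj, j.isLt⟩
  · rintro ⟨hcn, hnB⟩
    exact ⟨⟨n, hnB⟩, hcn, rfl⟩

section BlockExpectation

variable {𝒳 Ω : Type*} [MeasurableSpace 𝒳] [MeasurableSpace Ω] {k : 𝒳 → 𝒳 → ℝ} {K : ℝ}
  {P : Measure Ω} [IsFiniteMeasure P] {p q : Measure 𝒳} [IsFiniteMeasure p] [IsFiniteMeasure q]

lemma integrable_hker_comp (hk_meas : Measurable fun r : 𝒳 × 𝒳 => k r.1 r.2)
    (hk_bdd : ∀ x y, ‖k x y‖ ≤ K) {X₁ X₂ Y₁ Y₂ : Ω → 𝒳} (hX₁ : AEMeasurable X₁ P)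
    (hX₂ : AEMeasurable X₂ P) (hY₁ : AEMeasurable Y₁ P) (hY₂ : AEMeasurable Y₂ P) :
    Integrable (fun ω => hker k (X₁ ω) (X₂ ω) (Y₁ ω) (Y₂ ω)) P :=
  (((integrable_comp_of_norm_le hk_meas hk_bdd hX₁ hX₂).add
    (integrable_comp_of_norm_le hk_meas hk_bdd hY₁ hY₂)).sub
    (integrable_comp_of_norm_le hk_meas hk_bdd hX₁ hY₂)).sub
    (integrable_comp_of_norm_le hk_meas hk_bdd hX₂ hY₁)

lemma integral_mmdHat (hk_meas : Measurable fun r : 𝒳 × 𝒳 => k r.1 r.2)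
    (hk_bdd : ∀ x y, ‖k x y‖ ≤ K) (hk_symm : ∀ x y, k x y = k y x) {B : ℕ}
    {X Y : Fin B → Ω → 𝒳} (hX : ∀ a, AEMeasurable (X a) P) (hY : ∀ a, AEMeasurable (Y a) P)
    (hXY : iIndepFun (Sum.elim X Y) P) (hlawX : ∀ a, P.map (X a) = p) (S : Finset (Fin B))
    (hlawY : ∀ a, P.map (Y a) = if a ∈ S then q else p) :
    ∫ ω, mmdHat k B (fun a => X a ω) (fun a => Y a ω) ∂P =
      #S * (#S - 1) / (B * (B - 1)) * mmdSq k p q := by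
  have hterm : ∀ a b, a ≠ b →
      ∫ ω, hker k (X a ω) (X b ω) (Y a ω) (Y b ω) ∂P =
        if a ∈ S ∧ b ∈ S then mmdSq k p q else 0 := by
    intro a b hab
    rw [integral_hker_comp hk_meas hk_bdd (hX a) (hX b) (hY a) (hY b)
      (hXY.indepFun (i := .inl a) (j := .inl b) (by simpa using hab))
      (hXY.indepFun (i := .inr a) (j := .inr b) (by simpa using hab))
      (hXY.indepFun (i := .inl a) (j := .inr b) (by simp))
      (hXY.indepFun (i := .inl b) (j := .inr a) (by simp)), hlawX, hlawX, hlawY, hlawY]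
    exact hker_mean_ite hk_symm (integrable_comp_of_norm_le hk_meas hk_bdd
      measurable_fst.aemeasurable measurable_snd.aemeasurable) _ _
  have hint : ∀ a b, Integrable (fun ω => hker k (X a ω) (X b ω) (Y a ω) (Y b ω)) P :=
    fun a b => integrable_hker_comp hk_meas hk_bdd (hX a) (hX b) (hY a) (hY b)
  simp only [mmdHat]
  rw [integral_const_mul, integral_finsetSum _ fun a _ => integrable_finsetSum _ fun b _ =>
    hint a b]
  simp_rw [integral_finsetSum _ fun b _ => hint _ b]
  rw [sum_congr rfl fun a _ => sum_congr rfl fun b hb => hterm a b (ne_of_mem_erase hb).symm,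
    sum_sum_erase_ite_mem_and_mem]
  ring

end BlockExpectation

lemma integral_DhatSeq {𝒳 Ω : Type*} [MeasurableSpace 𝒳] [MeasurableSpace Ω]
    {p q : Measure 𝒳} [IsFiniteMeasure p] [IsFiniteMeasure q] {k : 𝒳 → 𝒳 → ℝ} {K : ℝ}
    (hk_meas : Measurable fun r : 𝒳 × 𝒳 => k r.1 r.2) (hk_bdd : ∀ x y, ‖k x y‖ ≤ K)
    (hk_symm : ∀ x y, k x y = k y x) {N : ℕ} (hN : N ≠ 0) {P : Measure Ω} [IsFiniteMeasure P]
    {X : Fin N → ℕ → Ω → 𝒳} {Y : ℤ → Ω → 𝒳}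
    (hXmeas : ∀ i j, Measurable (X i j)) (hYmeas : ∀ s, Measurable (Y s))
    (hIndep : iIndepFun (Sum.elim (fun ij : Fin N × ℕ => X ij.1 ij.2) Y) P)
    (hLawX : ∀ i j, P.map (X i j) = p)
    (hLawYpre : ∀ s : ℤ, s ≤ 0 → P.map (Y s) = p)
    (hLawYpost : ∀ s : ℤ, 1 ≤ s → P.map (Y s) = q) (t B : ℕ) :
    ∫ ω, DhatSeq k N B X Y t ω ∂P =
      (min B t : ℕ) * ((min B t : ℕ) - 1) / (B * (B - 1)) * mmdSq k p q := by
  set s : Fin B → ℤ := fun a => (t : ℤ) - B + 1 + (a : ℕ)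
  set S : Finset (Fin B) := {a | B - t ≤ (a : ℕ)}
  have hS : #S = min B t := by rw [Fin.card_filter_le_val, Nat.sub_sub_eq_min]
  have hlawY : ∀ a, P.map (Y (s a)) = if a ∈ S then q else p := by
    intro a
    split_ifs with ha <;> simp only [S, mem_filter, mem_univ, true_and] at ha
    · exact hLawYpost _ (by simp only [s]; omega)
    · exact hLawYpre _ (by simp only [s]; omega)
  have hblock : ∀ i, iIndepFun (Sum.elim (fun a : Fin B => X i a) (fun a => Y (s a))) P := by
    intro i
    have hinj : Function.Injective (Sum.map (fun a : Fin B => (i, (a : ℕ))) s) :=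
      Sum.map_injective.mpr ⟨fun a b h => Fin.ext (Prod.ext_iff.mp h).2,
        fun a b h => Fin.ext (by simpa [s] using h)⟩
    convert hIndep.precomp hinj using 1
    funext a
    cases a <;> rfl
  have hmean : ∀ i, ∫ ω, mmdHat k B (fun a => X i a ω) (fun a => Y (s a) ω) ∂P =
      (min B t : ℕ) * ((min B t : ℕ) - 1) / (B * (B - 1)) * mmdSq k p q := by
    intro i
    rw [integral_mmdHat hk_meas hk_bdd hk_symm (fun a => (hXmeas i a).aemeasurable)
      (fun a => (hYmeas (s a)).aemeasurable) (hblock i) (fun a => hLawX i a) S hlawY, hS]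
  have hint : ∀ i, Integrable (fun ω => mmdHat k B (fun a => X i a ω) (fun a => Y (s a) ω)) P :=
    fun i => (integrable_finsetSum _ fun (a : Fin B) _ =>
      integrable_finsetSum _ fun (b : Fin B) _ =>
      integrable_hker_comp hk_meas hk_bdd (hXmeas i a).aemeasurable (hXmeas i b).aemeasurable
        (hYmeas (s a)).aemeasurable (hYmeas (s b)).aemeasurable).const_mul _
  simp only [DhatSeq]
  rw [integral_const_mul, integral_finsetSum _ fun i _ => hint i,
    sum_congr rfl fun i _ => hmean i, sum_const, card_univ, Fintype.card_fin, nsmul_eq_mul,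
    ← mul_assoc, inv_mul_cancel₀ (Nat.cast_ne_zero.mpr hN), one_mul]

theorem stmt_3_general
    {𝒳 : Type*} [MeasurableSpace 𝒳] (p q : Measure 𝒳)
    [IsProbabilityMeasure p] [IsProbabilityMeasure q]
    (k : 𝒳 → 𝒳 → ℝ) (K : ℝ)
    (hk_meas : Measurable fun r : 𝒳 × 𝒳 => k r.1 r.2)
    (hk_symm : ∀ x y, k x y = k y x)
    (hk_nonneg : ∀ x y, 0 ≤ k x y) (hk_bdd : ∀ x y, k x y ≤ K)
    (N : ℕ) (hN : 1 ≤ N)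
    {Ω : Type*} [MeasurableSpace Ω] (P : Measure Ω) [IsProbabilityMeasure P]
    (X : Fin N → ℕ → Ω → 𝒳) (Y : ℤ → Ω → 𝒳)
    (hXmeas : ∀ i j, Measurable (X i j)) (hYmeas : ∀ s, Measurable (Y s))
    (hIndep : iIndepFun
      (Sum.elim (fun ij : Fin N × ℕ => X ij.1 ij.2) Y) P)
    (hLawX : ∀ i j, Measure.map (X i j) P = p)
    (hLawYpre : ∀ s : ℤ, s ≤ 0 → Measure.map (Y s) P = p)
    (hLawYpost : ∀ s : ℤ, 1 ≤ s → Measure.map (Y s) P = q)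
    (t B : ℕ) (hB : 2 ≤ B) :
    (B ≤ t →
      (∫ ω, DhatSeq k N B X Y t ω ∂P) = mmdSq k p q ∧
      (∫ ω, Zstat p k N B X Y t ω ∂P)
        = mmdSq k p q / Real.sqrt (varInfty p k N B)) ∧
    (t < B →
      (∫ ω, DhatSeq k N B X Y t ω ∂P)
        = (t : ℝ) * ((t : ℝ) - 1) / ((B : ℝ) * ((B : ℝ) - 1)) * mmdSq k p q ∧
      (∫ ω, Zstat p k N B X Y t ω ∂P)
        = (t : ℝ) * ((t : ℝ) - 1) / ((B : ℝ) * ((B : ℝ) - 1)) * mmdSq k p q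
            / Real.sqrt (varInfty p k N B)) := by
  have hk_norm : ∀ x y, ‖k x y‖ ≤ K := fun x y => by
    rw [Real.norm_of_nonneg (hk_nonneg x y)]
    exact hk_bdd x y
  have hmean := integral_DhatSeq hk_meas hk_norm hk_symm (by omega) hXmeas hYmeas hIndep hLawX
    hLawYpre hLawYpost t B (P := P)
  have hZ : ∫ ω, Zstat p k N B X Y t ω ∂P =
      (∫ ω, DhatSeq k N B X Y t ω ∂P) / Real.sqrt (varInfty p k N B) :=
    integral_div _ _
  refine ⟨fun hBt => ?_, fun htB => ?_⟩
  · have hBB : (B : ℝ) * (B - 1) ≠ 0 := by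
      have : (2 : ℝ) ≤ B := by exact_mod_cast hB
      exact mul_ne_zero (by positivity) (by linarith)
    rw [min_eq_left hBt, div_self hBB, one_mul] at hmean
    exact ⟨hmean, by rw [hZ, hmean]⟩
  · rw [min_eq_right htB.le] at hmean
    exact ⟨hmean, by rw [hZ, hmean]⟩

/-- **Mean of the block-averaged MMD statistic under the alternative.**
With a change at time `0` (observations `Y_s ~ p` for `s ≤ 0`, `Y_s ~ q` for `s ≥ 1`):
for `B ≤ t`, `E₀[D̂_B(t)] = 𝒟(p,q)`; for `B > t`,
`E₀[D̂_B(t)] = (t(t−1)/(B(B−1)))·𝒟(p,q)`; and correspondingly for the mean of the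
normalized statistic `Z_B(t)`. -/
theorem stmt_3
    {𝒳 : Type*} [MeasurableSpace 𝒳] (p q : Measure 𝒳)
    [IsProbabilityMeasure p] [IsProbabilityMeasure q]
    (k : 𝒳 → 𝒳 → ℝ) (K : ℝ) (hK : 0 < K)
    (hk_meas : Measurable fun r : 𝒳 × 𝒳 => k r.1 r.2)
    (hk_symm : ∀ x y, k x y = k y x)
    (hk_nonneg : ∀ x y, 0 ≤ k x y) (hk_bdd : ∀ x y, k x y ≤ K)
    (N : ℕ) (hN : 1 ≤ N)
    {Ω : Type*} [MeasurableSpace Ω] (P : Measure Ω) [IsProbabilityMeasure P]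
    (X : Fin N → ℕ → Ω → 𝒳) (Y : ℤ → Ω → 𝒳)
    (hXmeas : ∀ i j, Measurable (X i j)) (hYmeas : ∀ s, Measurable (Y s))
    (hIndep : iIndepFun
      (Sum.elim (fun ij : Fin N × ℕ => X ij.1 ij.2) Y) P)
    (hLawX : ∀ i j, Measure.map (X i j) P = p)
    (hLawYpre : ∀ s : ℤ, s ≤ 0 → Measure.map (Y s) P = p)
    (hLawYpost : ∀ s : ℤ, 1 ≤ s → Measure.map (Y s) P = q)
    (t B : ℕ) (ht : 1 ≤ t) (hB : 2 ≤ B) :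
    (B ≤ t →
      (∫ ω, DhatSeq k N B X Y t ω ∂P) = mmdSq k p q ∧
      (∫ ω, Zstat p k N B X Y t ω ∂P)
        = mmdSq k p q / Real.sqrt (varInfty p k N B)) ∧
    (t < B →
      (∫ ω, DhatSeq k N B X Y t ω ∂P)
        = (t : ℝ) * ((t : ℝ) - 1) / ((B : ℝ) * ((B : ℝ) - 1)) * mmdSq k p q ∧
      (∫ ω, Zstat p k N B X Y t ω ∂P)
        = (t : ℝ) * ((t : ℝ) - 1) / ((B : ℝ) * ((B : ℝ) - 1)) * mmdSq k p q
            / Real.sqrt (varInfty p k N B)) :=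
  stmt_3_general p q k K hk_meas hk_symm hk_nonneg hk_bdd N hN P X Y hXmeas hYmeas hIndep hLawX
    hLawYpre hLawYpost t B hB
end
end

section
/- Let Y₁,…,Y_B be i.i.d. from an arbitrary probability measure ν on 𝒳, and let X^{(1)},…,X^{(N)} be N blocks, each consisting of B i.i.d. p-distributed samples, with all N·B + B samples mutually independent. Set D̄ = (1/N) Σ_{i=1}^{N} D̂(X^{(i)}, (Y₁,…,Y_B)). Then for any z₁ > 0 and z₂ > 0, P( |D̄ − E[D̄]| ≥ z₁ + z₂ ) ≤ 2·exp( −N z₁² / (32 K²) ) + 2·exp( −B z₂² / (16 K²) ). -/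
open MeasureTheory ProbabilityTheory

noncomputable section

/-!
All `N * B + B` samples are independent, so the law of the tuple is a product measure and
McDiarmid's bounded-differences inequality applies to `D̄` as a function of all samples at once.
Replacing `X⁽ⁱ⁾ⱼ` moves only the `i`-th block estimate, by at most `4K/B`, hence moves `D̄` by at
most `4K/(NB)`; replacing `Yⱼ` moves every block estimate by at most `4K/B`, hence `D̄` by at most
`4K/B`.
The sum of the squared constants is `16K²(1 + 1/N)/B ≤ 32K²/B`, so McDiarmid gives
`P(|D̄ - E D̄| ≥ z) ≤ 2 exp(-B z² / (16K²))`, already stronger than the claim at `z = z₁ + z₂`.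
McDiarmid itself is proved by induction on the number of coordinates: integrating out the first
coordinate, Hoeffding's lemma bounds the conditional moment generating function of the increment.
-/

open scoped NNReal

lemma measurable_fin_cons_uncurry {𝒳 : Type*} [MeasurableSpace 𝒳] {n : ℕ} :
    Measurable fun p : 𝒳 × (Fin n → 𝒳) => (Fin.cons p.1 p.2 : Fin (n + 1) → 𝒳) := by
  simpa [Fin.insertNthEquiv, Fin.insertNth_zero'] using
    (MeasurableEquiv.piFinSuccAbove (fun _ : Fin (n + 1) => 𝒳) 0).symm.measurable

lemma measurable_fin_cons_left {𝒳 : Type*} [MeasurableSpace 𝒳] {n : ℕ} (y : Fin n → 𝒳) :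
    Measurable fun a : 𝒳 => (Fin.cons a y : Fin (n + 1) → 𝒳) :=
  measurable_fin_cons_uncurry.comp (measurable_id.prodMk measurable_const)

lemma integral_pi_fin_succ {𝒳 : Type*} [MeasurableSpace 𝒳] {n : ℕ}
    (μ : Fin (n + 1) → Measure 𝒳) [∀ i, SigmaFinite (μ i)] {F : (Fin (n + 1) → 𝒳) → ℝ}
    (hF : Integrable F (Measure.pi μ)) :
    ∫ x, F x ∂Measure.pi μ = ∫ y, ∫ a, F (Fin.cons a y) ∂μ 0 ∂Measure.pi fun j => μ j.succ := by
  have hmp := (measurePreserving_piFinSuccAbove μ 0).symm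
  have hFe := (hmp.integrable_comp_emb (MeasurableEquiv.measurableEmbedding _)).mpr hF
  rw [← hmp.integral_comp']
  exact (integral_prod_symm _ hFe).trans (by simp [Fin.insertNthEquiv, Fin.insertNth_zero'])

lemma exists_forall_mem_Icc_of_sub_le {α : Type*} [Nonempty α] {g : α → ℝ} {d : ℝ}
    (h : ∀ a b, g a - g b ≤ d) : ∃ lo, ∀ a, g a ∈ Set.Icc lo (lo + d) := by
  obtain ⟨b₀⟩ := ‹Nonempty α›
  have hbdd : BddBelow (Set.range g) := ⟨g b₀ - d, by rintro _ ⟨a, rfl⟩; linarith [h b₀ a]⟩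
  refine ⟨⨅ a, g a, fun a => ⟨ciInf_le hbdd a, ?_⟩⟩
  have : g a - d ≤ ⨅ b, g b := le_ciInf fun b => by linarith [h a b]
  linarith

lemma ProbabilityTheory.HasSubgaussianMGF.map_of_comp {Ω Ω' : Type*} [MeasurableSpace Ω]
    [MeasurableSpace Ω'] {ν : Measure Ω'} {E : Ω' → Ω} {X : Ω → ℝ} {c : ℝ≥0}
    (hE : Measurable E) (hX : Measurable X) (h : HasSubgaussianMGF (X ∘ E) c ν) :
    HasSubgaussianMGF X c (ν.map E) := by
  rw [← HasSubgaussianMGF.id_map_iff hX.aemeasurable, Measure.map_map hX hE]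
  exact (HasSubgaussianMGF.id_map_iff (hX.comp hE).aemeasurable).2 h

def HasBoundedDifferences {ι 𝒳 : Type*} [DecidableEq ι] (f : (ι → 𝒳) → ℝ) (c : ι → ℝ) : Prop :=
  ∀ i x a, |f (Function.update x i a) - f x| ≤ c i

namespace HasBoundedDifferences

variable {ι 𝒳 : Type*} [DecidableEq ι] {f : (ι → 𝒳) → ℝ} {c : ι → ℝ}

lemma abs_sub_le_sum [Fintype ι] (hf : HasBoundedDifferences f c) (x y : ι → 𝒳) :
    |f y - f x| ≤ ∑ i, c i := by
  suffices ∀ s : Finset ι, |f (s.piecewise y x) - f x| ≤ ∑ i ∈ s, c i by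
    simpa using this Finset.univ
  intro s
  induction s using Finset.induction_on with
  | empty => simp
  | insert a s ha ih =>
    rw [Finset.piecewise_insert, Finset.sum_insert ha]
    exact (abs_sub_le _ _ _).trans (add_le_add (hf _ _ _) ih)

lemma exists_abs_le [Fintype ι] (hf : HasBoundedDifferences f c) : ∃ C, ∀ x, |f x| ≤ C := by
  rcases isEmpty_or_nonempty (ι → 𝒳) with h | ⟨⟨x₀⟩⟩
  · exact ⟨0, fun x => isEmptyElim x⟩
  · refine ⟨|f x₀| + ∑ i, c i, fun x => ?_⟩
    have := hf.abs_sub_le_sum x₀ x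
    have := abs_sub_abs_le_abs_sub (f x) (f x₀)
    linarith

lemma fin_cons {n : ℕ} {f : (Fin (n + 1) → 𝒳) → ℝ} {c : Fin (n + 1) → ℝ}
    (hf : HasBoundedDifferences f c) (a : 𝒳) :
    HasBoundedDifferences (fun y => f (Fin.cons a y)) (fun j => c j.succ) := fun j y b => by
  simpa only [Fin.cons_update] using hf j.succ (Fin.cons a y) b

lemma comp_piCongrLeft {ι' : Type*} [DecidableEq ι'] (hf : HasBoundedDifferences f c)
    (e : ι' ≃ ι) :
    HasBoundedDifferences (fun y => f (Equiv.piCongrLeft (fun _ => 𝒳) e y)) (fun j => c (e j)) :=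
  fun j y b => by
  have : Equiv.piCongrLeft (fun _ => 𝒳) e (Function.update y j b)
      = Function.update (Equiv.piCongrLeft (fun _ => 𝒳) e y) (e j) b := by
    ext i
    obtain ⟨i, rfl⟩ := e.surjective i
    simp [Equiv.piCongrLeft_apply_apply, Function.update_apply]
  simpa [this] using hf (e j) _ b

variable [MeasurableSpace 𝒳]

lemma integrable_comp [Fintype ι] (hf : HasBoundedDifferences f c) (hfm : Measurable f)
    {Ω : Type*} [MeasurableSpace Ω] (μ : Measure Ω) [IsFiniteMeasure μ] {g : Ω → ι → 𝒳}
    (hg : Measurable g) : Integrable (fun ω => f (g ω)) μ := by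
  obtain ⟨C, hC⟩ := hf.exists_abs_le
  exact .of_bound (hfm.comp hg).aestronglyMeasurable C (ae_of_all _ fun ω => hC _)

lemma integrable_exp_mul [Fintype ι] (hf : HasBoundedDifferences f c) (hfm : Measurable f)
    (μ : Measure (ι → 𝒳)) [IsFiniteMeasure μ] (m t : ℝ) :
    Integrable (fun x => Real.exp (t * (f x - m))) μ := by
  obtain ⟨C, hC⟩ := hf.exists_abs_le
  refine integrable_exp_mul_of_mem_Icc (a := -C - m) (b := C - m)
    (hfm.sub_const m).aemeasurable (ae_of_all _ fun x => ?_)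
  have := abs_le.1 (hC x)
  constructor <;> linarith

lemma integral_fin_cons {n : ℕ} {f : (Fin (n + 1) → 𝒳) → ℝ} {c : Fin (n + 1) → ℝ}
    (hf : HasBoundedDifferences f c) (hfm : Measurable f) (μ₀ : Measure 𝒳)
    [IsProbabilityMeasure μ₀] :
    HasBoundedDifferences (fun y => ∫ a, f (Fin.cons a y) ∂μ₀) (fun j => c j.succ) :=
  fun j y b => by
  have hint : ∀ y : Fin n → 𝒳, Integrable (fun a => f (Fin.cons a y)) μ₀ := fun y =>
    hf.integrable_comp hfm μ₀ (measurable_fin_cons_left y)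
  rw [← integral_sub (hint _) (hint _)]
  simpa using norm_integral_le_of_norm_le_const (μ := μ₀)
    (f := fun a => f (Fin.cons a (Function.update y j b)) - f (Fin.cons a y))
    (ae_of_all μ₀ fun a => hf.fin_cons a j y b)

lemma hasSubgaussianMGF_fin_cons {n : ℕ} {f : (Fin (n + 1) → 𝒳) → ℝ} {c : Fin (n + 1) → ℝ}
    (hf : HasBoundedDifferences f c) (hfm : Measurable f) (μ₀ : Measure 𝒳)
    [IsProbabilityMeasure μ₀] (y : Fin n → 𝒳) :
    HasSubgaussianMGF (fun a => f (Fin.cons a y) - ∫ a', f (Fin.cons a' y) ∂μ₀)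
      ((‖c 0‖₊ / 2) ^ 2) μ₀ := by
  have := nonempty_of_isProbabilityMeasure μ₀
  obtain ⟨lo, hlo⟩ := exists_forall_mem_Icc_of_sub_le (g := fun a => f (Fin.cons a y))
    (d := c 0) fun a b => by
      simpa [Fin.update_cons_zero] using (abs_le.1 (hf 0 (Fin.cons b y) a)).2
  simpa using hasSubgaussianMGF_of_mem_Icc (hfm.comp (measurable_fin_cons_left y)).aemeasurable
    (ae_of_all μ₀ hlo)

open Real in
theorem hasSubgaussianMGF_sub_integral_pi_fin_succ {n : ℕ} (μ : Fin (n + 1) → Measure 𝒳)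
    [∀ i, IsProbabilityMeasure (μ i)] {f : (Fin (n + 1) → 𝒳) → ℝ} {c : Fin (n + 1) → ℝ}
    (hf : HasBoundedDifferences f c) (hfm : Measurable f) {c' : ℝ≥0}
    (hφ : HasSubgaussianMGF (fun y => ∫ a, f (Fin.cons a y) ∂μ 0
        - ∫ y, ∫ a, f (Fin.cons a y) ∂μ 0 ∂Measure.pi fun j => μ j.succ)
      c' (Measure.pi fun j => μ j.succ)) :
    HasSubgaussianMGF (fun x => f x - ∫ x, f x ∂Measure.pi μ) ((‖c 0‖₊ / 2) ^ 2 + c')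
      (Measure.pi μ) := by
  set μ' : Fin n → Measure 𝒳 := fun j => μ j.succ
  set φ : (Fin n → 𝒳) → ℝ := fun y => ∫ a, f (Fin.cons a y) ∂μ 0
  have hmean : ∫ x, f x ∂Measure.pi μ = ∫ y, φ y ∂Measure.pi μ' :=
    integral_pi_fin_succ μ (hf.integrable_comp hfm _ measurable_id)
  set m := ∫ x, f x ∂Measure.pi μ
  refine ⟨fun t => hf.integrable_exp_mul hfm _ m t, fun t => ?_⟩
  have hsplit : ∀ y a, exp (t * (f (Fin.cons a y) - m))
      = exp (t * (f (Fin.cons a y) - φ y)) * exp (t * (φ y - m)) := fun y a => by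
    rw [← exp_add]; ring_nf
  calc mgf (fun x => f x - m) (Measure.pi μ) t
      = ∫ y, ∫ a, exp (t * (f (Fin.cons a y) - m)) ∂μ 0 ∂Measure.pi μ' :=
        integral_pi_fin_succ μ (hf.integrable_exp_mul hfm _ m t)
    _ = ∫ y, mgf (fun a => f (Fin.cons a y) - φ y) (μ 0) t * exp (t * (φ y - m))
          ∂Measure.pi μ' := by
        simp only [hsplit, integral_mul_const, mgf]
    _ ≤ ∫ y, exp (↑((‖c 0‖₊ / 2) ^ 2 : ℝ≥0) * t ^ 2 / 2) * exp (t * (φ y - m))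
          ∂Measure.pi μ' := by
        refine integral_mono_of_nonneg
          (ae_of_all _ fun y => mul_nonneg mgf_nonneg (exp_nonneg _))
          (by simpa [hmean] using (hφ.integrable_exp_mul t).const_mul _)
          (ae_of_all _ fun y => mul_le_mul_of_nonneg_right ?_ (exp_nonneg _))
        exact (hf.hasSubgaussianMGF_fin_cons hfm (μ 0) y).mgf_le t
    _ = exp (↑((‖c 0‖₊ / 2) ^ 2 : ℝ≥0) * t ^ 2 / 2) * mgf (fun y => φ y - m) (Measure.pi μ') t := by
        rw [integral_const_mul]; rfl
    _ ≤ exp (↑((‖c 0‖₊ / 2) ^ 2 : ℝ≥0) * t ^ 2 / 2) * exp (c' * t ^ 2 / 2) := by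
        gcongr
        exact hmean ▸ hφ.mgf_le t
    _ = exp (↑((‖c 0‖₊ / 2) ^ 2 + c' : ℝ≥0) * t ^ 2 / 2) := by
        rw [NNReal.coe_add, ← exp_add]
        ring_nf

theorem hasSubgaussianMGF_sub_integral_pi_fin {n : ℕ} (μ : Fin n → Measure 𝒳)
    [∀ i, IsProbabilityMeasure (μ i)] {f : (Fin n → 𝒳) → ℝ} {c : Fin n → ℝ}
    (hf : HasBoundedDifferences f c) (hfm : Measurable f) :
    HasSubgaussianMGF (fun x => f x - ∫ x, f x ∂Measure.pi μ) (∑ i, (‖c i‖₊ / 2) ^ 2)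
      (Measure.pi μ) := by
  induction n with
  | zero =>
    have hconst : ∀ x, f x - ∫ x, f x ∂Measure.pi μ = 0 := fun x => by
      simp [Subsingleton.elim _ x]
    simp [hconst]
  | succ n ih =>
    have hφm : Measurable fun y => ∫ a, f (Fin.cons a y) ∂μ 0 :=
      (StronglyMeasurable.integral_prod_left (f := fun a y => f (Fin.cons a y))
        (hfm.comp measurable_fin_cons_uncurry).stronglyMeasurable).measurable
    rw [Fin.sum_univ_succ]
    exact hasSubgaussianMGF_sub_integral_pi_fin_succ μ hf hfm
      (ih (fun j => μ j.succ) (hf.integral_fin_cons hfm (μ 0)) hφm)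

theorem hasSubgaussianMGF_sub_integral_pi [Fintype ι] (μ : ι → Measure 𝒳)
    [∀ i, IsProbabilityMeasure (μ i)] (hf : HasBoundedDifferences f c) (hfm : Measurable f) :
    HasSubgaussianMGF (fun x => f x - ∫ x, f x ∂Measure.pi μ) (∑ i, (‖c i‖₊ / 2) ^ 2)
      (Measure.pi μ) := by
  let e := (Fintype.equivFin ι).symm
  let E := MeasurableEquiv.piCongrLeft (fun _ => 𝒳) e
  have hE : MeasurePreserving E (Measure.pi fun j => μ (e j)) (Measure.pi μ) :=
    measurePreserving_piCongrLeft μ e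
  have h : HasSubgaussianMGF (fun y => f (E y) - ∫ y, f (E y) ∂Measure.pi fun j => μ (e j))
      (∑ j, (‖c (e j)‖₊ / 2) ^ 2) (Measure.pi fun j => μ (e j)) :=
    hasSubgaussianMGF_sub_integral_pi_fin _ (hf.comp_piCongrLeft e) (hfm.comp E.measurable)
  rw [hE.integral_comp' (g := f), e.sum_comp (fun i => (‖c i‖₊ / 2) ^ 2)] at h
  simpa only [hE.map_eq] using h.map_of_comp E.measurable (hfm.sub_const _)

/-- **McDiarmid's inequality**. -/
theorem measureReal_abs_sub_integral_ge_le [Fintype ι] (μ : ι → Measure 𝒳)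
    [∀ i, IsProbabilityMeasure (μ i)] (hf : HasBoundedDifferences f c) (hfm : Measurable f)
    {ε : ℝ} (hε : 0 ≤ ε) :
    (Measure.pi μ).real {x | ε ≤ |f x - ∫ x, f x ∂Measure.pi μ|}
      ≤ 2 * Real.exp (-2 * ε ^ 2 / ∑ i, c i ^ 2) := by
  have h := hf.hasSubgaussianMGF_sub_integral_pi μ hfm
  have hparam : -ε ^ 2 / (2 * ↑(∑ i, (‖c i‖₊ / 2) ^ 2 : ℝ≥0)) = -2 * ε ^ 2 / ∑ i, c i ^ 2 := by
    push_cast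
    simp only [Real.norm_eq_abs, div_pow, sq_abs, ← Finset.sum_div]
    ring
  calc (Measure.pi μ).real {x | ε ≤ |f x - ∫ x, f x ∂Measure.pi μ|}
      ≤ (Measure.pi μ).real ({x | ε ≤ f x - ∫ x, f x ∂Measure.pi μ}
          ∪ {x | ε ≤ -(f x - ∫ x, f x ∂Measure.pi μ)}) :=
        measureReal_mono fun x (hx : ε ≤ |_|) => (le_abs.1 hx :)
    _ ≤ _ := measureReal_union_le _ _
    _ ≤ 2 * Real.exp (-2 * ε ^ 2 / ∑ i, c i ^ 2) := by
        rw [two_mul, ← hparam]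
        exact add_le_add (h.measure_ge_le hε) (h.neg.measure_ge_le hε)

end HasBoundedDifferences

lemma abs_sum_sum_erase_le {ι : Type*} [Fintype ι] [DecidableEq ι] (Δ : ι → ι → ℝ) (l : ι)
    {a : ℝ} (hΔ : ∀ i j, j ≠ i → |Δ i j| ≤ (if i = l then a else 0) + (if j = l then a else 0)) :
    |∑ i, ∑ j ∈ Finset.univ.erase i, Δ i j| ≤ 2 * ((Fintype.card ι : ℝ) - 1) * a := by
  calc |∑ i, ∑ j ∈ Finset.univ.erase i, Δ i j|
      ≤ ∑ i, ∑ j ∈ Finset.univ.erase i, |Δ i j| :=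
        (Finset.abs_sum_le_sum_abs _ _).trans
          (Finset.sum_le_sum fun i _ => Finset.abs_sum_le_sum_abs _ _)
    _ ≤ ∑ i, ∑ j ∈ Finset.univ.erase i, ((if i = l then a else 0) + (if j = l then a else 0)) :=
        Finset.sum_le_sum fun i _ => Finset.sum_le_sum fun j hj =>
          hΔ i j (Finset.ne_of_mem_erase hj)
    _ = 2 * ((Fintype.card ι : ℝ) - 1) * a := by
        have hcard : 1 ≤ Fintype.card ι := Fintype.card_pos_iff.2 ⟨l⟩
        simp [Finset.sum_add_distrib, Finset.sum_ite, Finset.filter_ne, Finset.card_erase_of_mem,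
          Nat.cast_sub hcard]
        ring

section KernelBounds

variable {𝒳 : Type*} {k : 𝒳 → 𝒳 → ℝ} {K : ℝ}

lemma abs_hker_sub_hker_left_le (hk₀ : ∀ x y, 0 ≤ k x y) (hkK : ∀ x y, k x y ≤ K)
    {x₁ x₂ y₁ y₂ x₁' y₁' : 𝒳} (h : x₁ = x₁' ∨ y₁ = y₁') :
    |hker k x₁ x₂ y₁ y₂ - hker k x₁' x₂ y₁' y₂| ≤ 2 * K := by
  rw [abs_le]
  rcases h with h | h <;> rw [h] <;> unfold hker <;> constructor <;>
    linarith [hk₀ y₁ y₂, hkK y₁ y₂, hk₀ y₁' y₂, hkK y₁' y₂, hk₀ x₂ y₁, hkK x₂ y₁, hk₀ x₂ y₁',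
      hkK x₂ y₁', hk₀ x₁ x₂, hkK x₁ x₂, hk₀ x₁' x₂, hkK x₁' x₂, hk₀ x₁ y₂, hkK x₁ y₂, hk₀ x₁' y₂,
      hkK x₁' y₂]

lemma abs_hker_sub_hker_right_le (hk₀ : ∀ x y, 0 ≤ k x y) (hkK : ∀ x y, k x y ≤ K)
    {x₁ x₂ y₁ y₂ x₂' y₂' : 𝒳} (h : x₂ = x₂' ∨ y₂ = y₂') :
    |hker k x₁ x₂ y₁ y₂ - hker k x₁ x₂' y₁ y₂'| ≤ 2 * K := by
  rw [abs_le]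
  rcases h with h | h <;> rw [h] <;> unfold hker <;> constructor <;>
    linarith [hk₀ y₁ y₂, hkK y₁ y₂, hk₀ y₁ y₂', hkK y₁ y₂', hk₀ x₁ y₂, hkK x₁ y₂, hk₀ x₁ y₂',
      hkK x₁ y₂', hk₀ x₁ x₂, hkK x₁ x₂, hk₀ x₁ x₂', hkK x₁ x₂', hk₀ x₂ y₁, hkK x₂ y₁, hk₀ x₂' y₁,
      hkK x₂' y₁]

lemma abs_mmdHat_sub_le (hk₀ : ∀ x y, 0 ≤ k x y) (hkK : ∀ x y, k x y ≤ K) {B : ℕ} (hB : 2 ≤ B)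
    {X X' Y Y' : Fin B → 𝒳} (l : Fin B) (hX : ∀ j ≠ l, X j = X' j) (hY : ∀ j ≠ l, Y j = Y' j)
    (hl : X l = X' l ∨ Y l = Y' l) :
    |mmdHat k B X Y - mmdHat k B X' Y'| ≤ 4 * K / B := by
  have hterm : ∀ i j, j ≠ i →
      |hker k (X i) (X j) (Y i) (Y j) - hker k (X' i) (X' j) (Y' i) (Y' j)|
        ≤ (if i = l then 2 * K else 0) + (if j = l then 2 * K else 0) := by
    intro i j hji
    by_cases hi : i = l
    · subst hi
      simpa [hji, hX j hji, hY j hji] using abs_hker_sub_hker_left_le hk₀ hkK hl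
    by_cases hj : j = l
    · subst hj
      simpa [hi, hX i hi, hY i hi] using abs_hker_sub_hker_right_le hk₀ hkK hl
    · simp [hi, hj, hX i hi, hX j hj, hY i hi, hY j hj]
  have hB₁ : (0 : ℝ) < B - 1 := by
    have : (2 : ℝ) ≤ B := by exact_mod_cast hB
    linarith
  unfold mmdHat
  rw [← mul_sub, ← Finset.sum_sub_distrib]
  simp_rw [← Finset.sum_sub_distrib]
  rw [abs_mul, abs_of_pos (by positivity)]
  calc ((B : ℝ) * (B - 1))⁻¹ * |_| ≤ ((B : ℝ) * (B - 1))⁻¹ * (2 * (B - 1) * (2 * K)) := by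
        gcongr
        simpa using abs_sum_sum_erase_le _ l hterm
    _ = 4 * K / B := by
        field_simp [hB₁.ne']
        ring

end KernelBounds

/-- The block-averaged statistic `D̄` as a function of all samples: `w (.inl (i, j))` is the
`j`-th sample of the block `X⁽ⁱ⁾` and `w (.inr j)` is `Yⱼ`. -/
def blockMMD {𝒳 : Type*} (k : 𝒳 → 𝒳 → ℝ) (N B : ℕ) (w : (Fin N × Fin B) ⊕ Fin B → 𝒳) : ℝ :=
  (N : ℝ)⁻¹ * ∑ i, mmdHat k B (fun j => w (.inl (i, j))) (fun j => w (.inr j))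

lemma measurable_blockMMD {𝒳 : Type*} [MeasurableSpace 𝒳] {k : 𝒳 → 𝒳 → ℝ}
    (hk : Measurable fun p : 𝒳 × 𝒳 => k p.1 p.2) (N B : ℕ) : Measurable (blockMMD k N B) := by
  have hk' : ∀ s s', Measurable fun w : (Fin N × Fin B) ⊕ Fin B → 𝒳 => k (w s) (w s') :=
    fun s s' => hk.comp (f := fun w : (Fin N × Fin B) ⊕ Fin B → 𝒳 => (w s, w s')) (by fun_prop)
  unfold blockMMD mmdHat hker
  fun_prop

def blockMMDBound (K : ℝ) (N B : ℕ) : (Fin N × Fin B) ⊕ Fin B → ℝ :=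
  Sum.elim (fun _ => (N : ℝ)⁻¹ * (4 * K / B)) (fun _ => 4 * K / B)

lemma blockMMD_hasBoundedDifferences {𝒳 : Type*} {k : 𝒳 → 𝒳 → ℝ} {K : ℝ}
    (hk₀ : ∀ x y, 0 ≤ k x y) (hkK : ∀ x y, k x y ≤ K) (N : ℕ) {B : ℕ} (hB : 2 ≤ B) :
    HasBoundedDifferences (blockMMD k N B) (blockMMDBound K N B) := by
  rintro (⟨i₀, l⟩ | l) w a <;> simp only [blockMMD, blockMMDBound, ← mul_sub,
    ← Finset.sum_sub_distrib, abs_mul, abs_inv, Nat.abs_cast, Sum.elim_inl, Sum.elim_inr]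
  · rw [Finset.sum_eq_single i₀ (fun i _ hi => by simp [hi]) (by simp)]
    gcongr
    exact abs_mmdHat_sub_le hk₀ hkK hB l (fun j hj => by simp [hj]) (fun j _ => by simp)
      (Or.inr (by simp))
  · have hK : 0 ≤ 4 * K / B := by have := (hk₀ a a).trans (hkK a a); positivity
    calc (N : ℝ)⁻¹ * |∑ i, _| ≤ (N : ℝ)⁻¹ * ∑ _i : Fin N, 4 * K / B := by
          gcongr
          refine (Finset.abs_sum_le_sum_abs _ _).trans (Finset.sum_le_sum fun i _ => ?_)
          exact abs_mmdHat_sub_le hk₀ hkK hB l (fun j _ => by simp) (fun j hj => by simp [hj])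
            (Or.inl (by simp))
      _ ≤ 4 * K / B := by
          rw [Finset.sum_const, Finset.card_univ, Fintype.card_fin, nsmul_eq_mul, ← mul_assoc]
          exact mul_le_of_le_one_left hK (inv_mul_le_one_of_le₀ le_rfl (Nat.cast_nonneg N))

lemma sum_sq_blockMMDBound (K : ℝ) (N : ℕ) {B : ℕ} (hB : B ≠ 0) :
    ∑ s, blockMMDBound K N B s ^ 2 = 16 * K ^ 2 / B * ((N : ℝ)⁻¹ + 1) := by
  simp only [blockMMDBound, Fintype.sum_sum_type, Sum.elim_inl, Sum.elim_inr, Finset.sum_const,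
    Finset.card_univ, Fintype.card_prod, Fintype.card_fin, nsmul_eq_mul, Nat.cast_mul]
  rcases eq_or_ne N 0 with rfl | hN <;> field_simp <;> ring

lemma mul_sq_div_le_two_mul_sq_div_sum_sq_blockMMDBound {K : ℝ} (hK : 0 < K) (N : ℕ) {B : ℕ}
    (hB : B ≠ 0) (z : ℝ) :
    B * z ^ 2 / (16 * K ^ 2) ≤ 2 * z ^ 2 / ∑ s, blockMMDBound K N B s ^ 2 := by
  have hN : (N : ℝ)⁻¹ + 1 ≤ 2 := by linarith [Nat.cast_inv_le_one (α := ℝ) N]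
  rw [sum_sq_blockMMDBound K N hB]
  calc (B : ℝ) * z ^ 2 / (16 * K ^ 2) = 2 * z ^ 2 / (16 * K ^ 2 / B * 2) := by field_simp
    _ ≤ 2 * z ^ 2 / (16 * K ^ 2 / B * ((N : ℝ)⁻¹ + 1)) := by gcongr

lemma measureReal_abs_sub_integral_ge_of_map_eq {Ω β : Type*} [MeasurableSpace Ω] [MeasurableSpace β]
    {P : Measure Ω} {π : Measure β} {T : Ω → β} (hT : Measurable T) (hlaw : P.map T = π)
    {F : β → ℝ} (hF : Measurable F) (ε : ℝ) :
    P.real {ω | ε ≤ |F (T ω) - ∫ ω', F (T ω') ∂P|} = π.real {w | ε ≤ |F w - ∫ w, F w ∂π|} := by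
  rw [← hlaw, integral_map hT.aemeasurable hF.aestronglyMeasurable,
    map_measureReal_apply hT (measurableSet_le measurable_const (hF.sub_const _).abs)]
  rfl

theorem stmt_4_general
    {𝒳 : Type*} [MeasurableSpace 𝒳]
    (k : 𝒳 → 𝒳 → ℝ) (K : ℝ) (hK : 0 < K)
    (hk_meas : Measurable fun r : 𝒳 × 𝒳 => k r.1 r.2)
    (hk_nonneg : ∀ x y, 0 ≤ k x y) (hk_bdd : ∀ x y, k x y ≤ K)
    (B N : ℕ) (hB : 2 ≤ B)
    {Ω : Type*} [MeasurableSpace Ω] (P : Measure Ω) [IsProbabilityMeasure P]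
    (X : Fin N → Fin B → Ω → 𝒳) (Y : Fin B → Ω → 𝒳)
    (hXmeas : ∀ i j, Measurable (X i j)) (hYmeas : ∀ j, Measurable (Y j))
    (hIndep : iIndepFun
      (Sum.elim (fun ij : Fin N × Fin B => X ij.1 ij.2) Y) P)
    (z₁ z₂ : ℝ) (hz₁ : 0 < z₁) (hz₂ : 0 < z₂) :
    (P {ω | z₁ + z₂ ≤
        |((N : ℝ)⁻¹ * ∑ i : Fin N, mmdHat k B (fun j => X i j ω) fun j => Y j ω)
          - ∫ ω', (N : ℝ)⁻¹ * ∑ i : Fin N,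
              mmdHat k B (fun j => X i j ω') fun j => Y j ω' ∂P|}).toReal
      ≤ 2 * Real.exp (-((N : ℝ) * z₁ ^ 2) / (32 * K ^ 2))
        + 2 * Real.exp (-((B : ℝ) * z₂ ^ 2) / (16 * K ^ 2)) := by
  set G := Sum.elim (fun ij : Fin N × Fin B => X ij.1 ij.2) Y
  have hG : ∀ s, Measurable (G s) := by
    rintro (⟨i, j⟩ | j)
    exacts [hXmeas i j, hYmeas j]
  have := fun s => Measure.isProbabilityMeasure_map (μ := P) (hG s).aemeasurable
  have hF := measurable_blockMMD hk_meas N B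
  have hB₀ : B ≠ 0 := by omega
  calc (P {ω | z₁ + z₂ ≤ |_ - _|}).toReal
      = (Measure.pi fun s => P.map (G s)).real
          {w | z₁ + z₂ ≤ |blockMMD k N B w - ∫ w, blockMMD k N B w ∂Measure.pi _|} :=
        measureReal_abs_sub_integral_ge_of_map_eq (measurable_pi_lambda _ hG)
          (hIndep.map_fun_eq_pi_map fun s => (hG s).aemeasurable) hF _
    _ ≤ 2 * Real.exp (-2 * (z₁ + z₂) ^ 2 / ∑ s, blockMMDBound K N B s ^ 2) :=
        (blockMMD_hasBoundedDifferences hk_nonneg hk_bdd N hB).measureReal_abs_sub_integral_ge_le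
          _ hF (by positivity)
    _ ≤ 2 * Real.exp (-((B : ℝ) * z₂ ^ 2) / (16 * K ^ 2)) := by
        gcongr 2 * Real.exp ?_
        rw [neg_mul, neg_div, neg_div, neg_le_neg_iff]
        calc (B : ℝ) * z₂ ^ 2 / (16 * K ^ 2) ≤ B * (z₁ + z₂) ^ 2 / (16 * K ^ 2) := by
              gcongr; linarith
          _ ≤ 2 * (z₁ + z₂) ^ 2 / ∑ s, blockMMDBound K N B s ^ 2 :=
              mul_sq_div_le_two_mul_sq_div_sum_sq_blockMMDBound hK N hB₀ _
    _ ≤ 2 * Real.exp (-((N : ℝ) * z₁ ^ 2) / (32 * K ^ 2))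
        + 2 * Real.exp (-((B : ℝ) * z₂ ^ 2) / (16 * K ^ 2)) :=
        le_add_of_nonneg_left (by positivity)

/-- **Concentration inequality for the block-averaged MMD statistic.**
If `Y₁,…,Y_B` are i.i.d. from `ν` and the `N` blocks `X⁽¹⁾,…,X⁽ᴺ⁾` each consist of `B`
i.i.d. `p`-samples (all samples mutually independent), then for all `z₁, z₂ > 0`,
`P(|D̄ − E[D̄]| ≥ z₁ + z₂) ≤ 2·exp(−Nz₁²/(32K²)) + 2·exp(−Bz₂²/(16K²))`. -/
theorem stmt_4
    {𝒳 : Type*} [MeasurableSpace 𝒳] (p ν : Measure 𝒳)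
    [IsProbabilityMeasure p] [IsProbabilityMeasure ν]
    (k : 𝒳 → 𝒳 → ℝ) (K : ℝ) (hK : 0 < K)
    (hk_meas : Measurable fun r : 𝒳 × 𝒳 => k r.1 r.2)
    (hk_symm : ∀ x y, k x y = k y x)
    (hk_nonneg : ∀ x y, 0 ≤ k x y) (hk_bdd : ∀ x y, k x y ≤ K)
    (B N : ℕ) (hB : 2 ≤ B) (hN : 1 ≤ N)
    {Ω : Type*} [MeasurableSpace Ω] (P : Measure Ω) [IsProbabilityMeasure P]
    (X : Fin N → Fin B → Ω → 𝒳) (Y : Fin B → Ω → 𝒳)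
    (hXmeas : ∀ i j, Measurable (X i j)) (hYmeas : ∀ j, Measurable (Y j))
    (hIndep : iIndepFun
      (Sum.elim (fun ij : Fin N × Fin B => X ij.1 ij.2) Y) P)
    (hLawX : ∀ i j, Measure.map (X i j) P = p)
    (hLawY : ∀ j, Measure.map (Y j) P = ν)
    (z₁ z₂ : ℝ) (hz₁ : 0 < z₁) (hz₂ : 0 < z₂) :
    (P {ω | z₁ + z₂ ≤
        |((N : ℝ)⁻¹ * ∑ i : Fin N, mmdHat k B (fun j => X i j ω) fun j => Y j ω)
          - ∫ ω', (N : ℝ)⁻¹ * ∑ i : Fin N,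
              mmdHat k B (fun j => X i j ω') fun j => Y j ω' ∂P|}).toReal
      ≤ 2 * Real.exp (-((N : ℝ) * z₁ ^ 2) / (32 * K ^ 2))
        + 2 * Real.exp (-((B : ℝ) * z₂ ^ 2) / (16 * K ^ 2)) :=
  stmt_4_general k K hK hk_meas hk_nonneg hk_bdd B N hB P X Y hXmeas hYmeas hIndep z₁ z₂ hz₁ hz₂
end
end
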